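/- arXiv:2511.12408 — 4 statements merged into one kernel-verified Lean document; each statement's English description precedes it below -/
import Mathlib

section
/- For every integer n ≥ 2 and every k with 0 ≤ k ≤ ⌊n/2⌋, the increment γ_k(D_{n,s+1}) − γ_k(D_{n,s}) of the γ-vector of the intermediate arrangement D_{n,s} is independent of s; that is, the sequence (γ_k(D_{n,s}))_{s=0,1,...,n} is an arithmetic progression in s. -/
noncomputable section

/-- A face of a (central) hyperplane arrangement in `ℝⁿ`, the arrangement being given by a
set `A` of normal vectors of its hyperplanes: a nonempty set obtained by prescribing, for each
hyperplane, whether points lie on it or on its positive or negative open side. -/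
def IsFace (n : ℕ) (A : Set (Fin n → ℝ)) (σ : Set (Fin n → ℝ)) : Prop :=
  σ.Nonempty ∧ ∃ ε : (Fin n → ℝ) → SignType,
    σ = {x | ∀ a ∈ A, SignType.sign (∑ t, a t * x t) = ε a}

/-- The number of faces of `A` of dimension `d` (dimension = dimension of the linear span). -/
def fnum (n : ℕ) (A : Set (Fin n → ℝ)) (d : ℕ) : ℕ :=
  Nat.card {σ : Set (Fin n → ℝ) // IsFace n A σ ∧ Module.finrank ℝ ↥(Submodule.span ℝ σ) = d}

/-- The f-polynomial `f(t) = Σ_{i=0}^{n} f_{n−1−i} tⁱ`, where `f_k` counts faces of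
dimension `k+1`. -/
def fPoly (n : ℕ) (A : Set (Fin n → ℝ)) : Polynomial ℚ :=
  ∑ i ∈ Finset.range (n + 1), Polynomial.C (fnum n A (n - i) : ℚ) * Polynomial.X ^ i

/-- The h-polynomial `h(t) = f(t−1)`. -/
def hPoly (n : ℕ) (A : Set (Fin n → ℝ)) : Polynomial ℚ :=
  (fPoly n A).comp (Polynomial.X - 1)

/-- The set of normal vectors of the intermediate arrangement `D_{n,s}`:
`e_i − e_j`, `e_i + e_j` for `i < j`, and `e_k` for the first `s` coordinates. -/
def dns (n s : ℕ) : Set (Fin n → ℝ) :=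
  {v | ∃ i j : Fin n, i < j ∧
    (v = Pi.single i (1 : ℝ) - Pi.single j 1 ∨ v = Pi.single i (1 : ℝ) + Pi.single j 1)} ∪
  {v | ∃ k : Fin n, (k : ℕ) < s ∧ v = Pi.single k (1 : ℝ)}

namespace Gam

def ip {n : ℕ} (a x : Fin n → ℝ) : ℝ := ∑ t, a t * x t

lemma ip_single {n : ℕ} (i : Fin n) (x : Fin n → ℝ) :
    ip (Pi.single i (1:ℝ) : Fin n → ℝ) x = x i := by
  unfold ip
  rw [Finset.sum_eq_single i]
  · simp
  · intro b _ hb; simp [Pi.single_apply, hb]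
  · simp

lemma ip_sub {n : ℕ} (a b x : Fin n → ℝ) : ip (a - b) x = ip a x - ip b x := by
  unfold ip; rw [← Finset.sum_sub_distrib]; congr 1; funext t; simp [sub_mul]

lemma ip_add {n : ℕ} (a b x : Fin n → ℝ) : ip (a + b) x = ip a x + ip b x := by
  unfold ip; rw [← Finset.sum_add_distrib]; congr 1; funext t; simp [add_mul]

lemma ip_single_sub {n : ℕ} (i j : Fin n) (x : Fin n → ℝ) :
    ip ((Pi.single i (1:ℝ) : Fin n → ℝ) - Pi.single j 1) x = x i - x j := by
  rw [ip_sub, ip_single, ip_single]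

lemma ip_single_add {n : ℕ} (i j : Fin n) (x : Fin n → ℝ) :
    ip ((Pi.single i (1:ℝ) : Fin n → ℝ) + Pi.single j 1) x = x i + x j := by
  rw [ip_add, ip_single, ip_single]

lemma sval {n : ℕ} (i t : Fin n) : (Pi.single i (1:ℝ) : Fin n → ℝ) t = if t = i then 1 else 0 := by
  rw [Pi.single_apply]

lemma single_ne_zero' {n : ℕ} (i : Fin n) : (Pi.single i (1:ℝ) : Fin n → ℝ) ≠ 0 := by
  intro h
  have := congrFun h i
  rw [sval, if_pos rfl] at this
  simp at this

lemma single_not_mem_pairs {n : ℕ} {i p q : Fin n} (hpq : p < q) :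
    (Pi.single i (1:ℝ) : Fin n → ℝ) ≠ Pi.single p (1:ℝ) - Pi.single q 1 ∧
    (Pi.single i (1:ℝ) : Fin n → ℝ) ≠ Pi.single p (1:ℝ) + Pi.single q 1 := by
  constructor
  · intro h
    have hq := congrFun h q
    rw [sval, Pi.sub_apply, sval, sval, if_neg (fun hh : q = p => hpq.ne' hh), if_pos rfl] at hq
    split_ifs at hq <;> norm_num at hq
  · intro h
    have hp := congrFun h p
    have hq := congrFun h q
    rw [sval, Pi.add_apply, sval, sval, if_neg (fun hh : q = p => hpq.ne' hh), if_pos rfl] at hq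
    rw [sval, Pi.add_apply, sval, sval, if_pos rfl, if_neg (fun hh : p = q => hpq.ne hh)] at hp
    split_ifs at hq with h1 <;> split_ifs at hp with h2 <;> (try norm_num at hq) <;> (try norm_num at hp)
    exact hpq.ne (h2.trans h1.symm)

lemma single_inj' {n : ℕ} {i k : Fin n}
    (h : (Pi.single i (1:ℝ) : Fin n → ℝ) = Pi.single k 1) : i = k := by
  have := congrFun h i
  rw [sval, sval, if_pos rfl] at this
  by_contra hne
  rw [if_neg hne] at this
  exact one_ne_zero this

lemma dns_mono {n s s' : ℕ} (h : s ≤ s') : dns n s ⊆ dns n s' := by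
  intro v hv
  rcases hv with h1 | h2
  · exact Or.inl h1
  · rcases h2 with ⟨k, hk, hv⟩; exact Or.inr ⟨k, lt_of_lt_of_le hk h, hv⟩

lemma single_not_mem_dns {n s : ℕ} {i : Fin n} (hi : s ≤ (i : ℕ)) :
    (Pi.single i (1:ℝ) : Fin n → ℝ) ∉ dns n s := by
  rintro (⟨p, q, hpq, h | h⟩ | ⟨k, hk, h⟩)
  · exact (single_not_mem_pairs hpq).1 h
  · exact (single_not_mem_pairs hpq).2 h
  · have := single_inj' h
    omega

lemma dns_succ {n s : ℕ} (i : Fin n) (hi : (i : ℕ) = s) :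
    dns n (s+1) = dns n s ∪ {(Pi.single i (1:ℝ) : Fin n → ℝ)} := by
  ext v
  constructor
  · rintro (h1 | ⟨k, hk, hv⟩)
    · exact Or.inl (Or.inl h1)
    · rcases Nat.lt_succ_iff_lt_or_eq.mp hk with hk' | hk'
      · exact Or.inl (Or.inr ⟨k, hk', hv⟩)
      · right
        have : k = i := Fin.ext (by omega)
        rw [this] at hv
        simp [hv]
  · rintro (h1 | h2)
    · exact dns_mono (Nat.le_succ s) h1
    · simp only [Set.mem_singleton_iff] at h2
      exact Or.inr ⟨i, by omega, h2⟩

/-- members of dns n s: the three shapes with ip values -/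
lemma dns_cases {n s : ℕ} {a : Fin n → ℝ} (ha : a ∈ dns n s) :
    (∃ p q : Fin n, p < q ∧ ∀ x : Fin n → ℝ, ip a x = x p - x q) ∨
    (∃ p q : Fin n, p < q ∧ ∀ x : Fin n → ℝ, ip a x = x p + x q) ∨
    (∃ k : Fin n, (k:ℕ) < s ∧ ∀ x : Fin n → ℝ, ip a x = x k) := by
  rcases ha with ⟨p, q, hpq, h | h⟩ | ⟨k, hk, h⟩
  · exact Or.inl ⟨p, q, hpq, fun x => by rw [h, ip_single_sub]⟩
  · exact Or.inr (Or.inl ⟨p, q, hpq, fun x => by rw [h, ip_single_add]⟩)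
  · exact Or.inr (Or.inr ⟨k, hk, fun x => by rw [h, ip_single]⟩)



lemma isFace_iff {n : ℕ} {A σ : Set (Fin n → ℝ)} :
    IsFace n A σ ↔ σ.Nonempty ∧ ∃ ε : (Fin n → ℝ) → SignType,
      σ = {x | ∀ a ∈ A, SignType.sign (ip a x) = ε a} := Iff.rfl

lemma sign_const {n : ℕ} {A σ : Set (Fin n → ℝ)} (hσ : IsFace n A σ)
    {a : Fin n → ℝ} (ha : a ∈ A) {x y : Fin n → ℝ} (hx : x ∈ σ) (hy : y ∈ σ) :
    SignType.sign (ip a x) = SignType.sign (ip a y) := by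
  obtain ⟨-, ε, rfl⟩ := hσ
  exact (hx a ha).trans (hy a ha).symm

lemma faceEq {n : ℕ} {A σ : Set (Fin n → ℝ)} (hσ : IsFace n A σ)
    {x₀ : Fin n → ℝ} (hx₀ : x₀ ∈ σ) :
    σ = {x | ∀ a ∈ A, SignType.sign (ip a x) = SignType.sign (ip a x₀)} := by
  obtain ⟨hne, ε, hset⟩ := hσ
  have hx₀' := hset ▸ hx₀
  rw [hset]
  ext x
  constructor
  · intro hx a ha
    exact (hx a ha).trans (hx₀' a ha).symm
  · intro hx a ha
    exact (hx a ha).trans (hx₀' a ha)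

lemma face_of_point {n : ℕ} (A : Set (Fin n → ℝ)) (x₀ : Fin n → ℝ) :
    IsFace n A {x | ∀ a ∈ A, SignType.sign (ip a x) = SignType.sign (ip a x₀)} :=
  ⟨⟨x₀, fun _ _ => rfl⟩, fun a => SignType.sign (ip a x₀), rfl⟩

/-- dns is a finite set -/
lemma dns_finite (n s : ℕ) : (dns n s).Finite := by
  have h1 : dns n s ⊆
      (Set.range fun pq : Fin n × Fin n => (Pi.single pq.1 (1:ℝ) : Fin n → ℝ) - Pi.single pq.2 1) ∪
      (Set.range fun pq : Fin n × Fin n => (Pi.single pq.1 (1:ℝ) : Fin n → ℝ) + Pi.single pq.2 1) ∪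
      (Set.range fun k : Fin n => (Pi.single k (1:ℝ) : Fin n → ℝ)) := by
    rintro v (⟨p, q, hpq, h | h⟩ | ⟨k, hk, h⟩)
    · exact Or.inl (Or.inl ⟨(p, q), h.symm⟩)
    · exact Or.inl (Or.inr ⟨(p, q), h.symm⟩)
    · exact Or.inr ⟨k, h.symm⟩
  exact Set.Finite.subset (((Set.finite_range _).union (Set.finite_range _)).union
    (Set.finite_range _)) h1

/-- the faces of a finite arrangement form a finite type -/
lemma face_finite {n : ℕ} {A : Set (Fin n → ℝ)} (hA : A.Finite) :
    Finite {σ : Set (Fin n → ℝ) // IsFace n A σ} := by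
  haveI : Finite ↥A := hA.to_subtype
  apply Finite.of_injective (fun σ : {σ : Set (Fin n → ℝ) // IsFace n A σ} =>
    (fun a : ↥A => SignType.sign (ip a.1 σ.2.1.some)))
  intro σ τ h
  apply Subtype.ext
  rw [faceEq σ.2 σ.2.1.some_mem, faceEq τ.2 τ.2.1.some_mem]
  ext x
  constructor
  · intro hx a ha
    have := congrFun h ⟨a, ha⟩
    simp only at this
    rw [hx a ha, ← this]
  · intro hx a ha
    have := congrFun h ⟨a, ha⟩
    simp only at this
    rw [hx a ha, this]

lemma face_sub_finite {n : ℕ} {A : Set (Fin n → ℝ)} (hA : A.Finite)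
    (P : Set (Fin n → ℝ) → Prop) :
    Finite {σ : Set (Fin n → ℝ) // IsFace n A σ ∧ P σ} := by
  haveI := face_finite hA
  apply Finite.of_injective (fun σ : {σ : Set (Fin n → ℝ) // IsFace n A σ ∧ P σ} =>
    (⟨σ.1, σ.2.1⟩ : {σ : Set (Fin n → ℝ) // IsFace n A σ}))
  intro σ τ h
  simp only [Subtype.mk.injEq] at h
  exact Subtype.ext h

/-- key sign computations -/
lemma sign_pattern_lt {a b : ℝ} (h1 : SignType.sign (a - b) = 1) (h2 : SignType.sign (a + b) = -1) :
    |a| < |b| ∧ b < 0 := by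
  rw [sign_eq_one_iff] at h1
  rw [sign_eq_neg_one_iff] at h2
  have hb : b < 0 := by linarith
  constructor
  · rw [abs_lt, abs_of_neg hb]
    constructor <;> linarith
  · exact hb

lemma sign_pattern_gt {a b : ℝ} (h1 : SignType.sign (a - b) = -1) (h2 : SignType.sign (a + b) = 1) :
    |a| < |b| ∧ 0 < b := by
  rw [sign_eq_neg_one_iff] at h1
  rw [sign_eq_one_iff] at h2
  have hb : 0 < b := by linarith
  constructor
  · rw [abs_lt, abs_of_pos hb]
    constructor <;> linarith
  · exact hb

lemma sign_dom_sub {u w : ℝ} (h : |u| < |w|) : SignType.sign (u - w) = - SignType.sign w := by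
  rcases lt_trichotomy w 0 with hw | hw | hw
  · obtain ⟨hl, hr⟩ := abs_lt.mp h
    rw [abs_of_neg hw] at hl hr
    have h0 : 0 < u - w := by linarith
    rw [sign_eq_one_iff.mpr h0, sign_eq_neg_one_iff.mpr hw]
    decide
  · rw [hw] at h; simp at h; linarith [abs_nonneg u]
  · obtain ⟨hl, hr⟩ := abs_lt.mp h
    rw [abs_of_pos hw] at hl hr
    have h0 : u - w < 0 := by linarith
    rw [sign_eq_neg_one_iff.mpr h0, sign_eq_one_iff.mpr hw]

lemma sign_dom_add {u w : ℝ} (h : |u| < |w|) : SignType.sign (u + w) = SignType.sign w := by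
  rcases lt_trichotomy w 0 with hw | hw | hw
  · obtain ⟨hl, hr⟩ := abs_lt.mp h
    rw [abs_of_neg hw] at hl hr
    have h0 : u + w < 0 := by linarith
    rw [sign_eq_neg_one_iff.mpr h0, sign_eq_neg_one_iff.mpr hw]
  · rw [hw] at h; simp at h; linarith [abs_nonneg u]
  · obtain ⟨hl, hr⟩ := abs_lt.mp h
    rw [abs_of_pos hw] at hl hr
    have h0 : 0 < u + w := by linarith
    rw [sign_eq_one_iff.mpr h0, sign_eq_one_iff.mpr hw]



lemma sign_dom_add' {u w : ℝ} (h : |u| < |w|) : SignType.sign (w + u) = SignType.sign w := by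
  rw [add_comm]; exact sign_dom_add h

lemma signCases (v : SignType) : v = -1 ∨ v = 0 ∨ v = 1 := by
  rcases v with _|_|_ <;> simp

/-- the central real-variable lemma behind dominance -/
lemma dom_core {u0 v0 u1 v1 u v : ℝ}
    (e1 : SignType.sign (u0 - v0) = SignType.sign (u1 - v1))
    (e2 : SignType.sign (u0 + v0) = SignType.sign (u1 + v1))
    (f1 : SignType.sign (u - v) = SignType.sign (u0 - v0))
    (f2 : SignType.sign (u + v) = SignType.sign (u0 + v0))
    (hu0 : 0 < u0) (hu1 : u1 < 0) :
    |u| < |v| ∧ SignType.sign v = SignType.sign v0 := by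
  have key : (SignType.sign (u0 - v0) = 1 ∧ SignType.sign (u0 + v0) = -1) ∨
      (SignType.sign (u0 - v0) = -1 ∧ SignType.sign (u0 + v0) = 1) := by
    rcases signCases (SignType.sign (u0 - v0)) with h1 | h1 | h1 <;>
      rcases signCases (SignType.sign (u0 + v0)) with h2 | h2 | h2
    all_goals try (left; exact ⟨h1, h2⟩)
    all_goals try (right; exact ⟨h1, h2⟩)
    all_goals (
      exfalso
      have A := e1.symm.trans h1
      have B := e2.symm.trans h2
      simp only [sign_eq_neg_one_iff, sign_eq_zero_iff, sign_eq_one_iff] at h1 h2 A B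
      linarith)
  rcases key with ⟨h1, h2⟩ | ⟨h1, h2⟩
  · have pz := sign_pattern_lt (f1.trans h1) (f2.trans h2)
    have p0 := sign_pattern_lt h1 h2
    exact ⟨pz.1, by rw [sign_eq_neg_one_iff.mpr pz.2, sign_eq_neg_one_iff.mpr p0.2]⟩
  · have pz := sign_pattern_gt (f1.trans h1) (f2.trans h2)
    have p0 := sign_pattern_gt h1 h2
    exact ⟨pz.1, by rw [sign_eq_one_iff.mpr pz.2, sign_eq_one_iff.mpr p0.2]⟩

/-- the central real-variable lemma behind sign-constancy -/
lemma rigid_core {u0 v0 u v : ℝ}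
    (f1 : SignType.sign (u - v) = SignType.sign (u0 - v0))
    (f2 : SignType.sign (u + v) = SignType.sign (u0 + v0))
    (h3 : |v0| ≤ |u0|) :
    SignType.sign u = SignType.sign u0 := by
  rcases lt_trichotomy u0 0 with h | h | h
  · rw [abs_of_neg h] at h3
    obtain ⟨b1, b2⟩ := abs_le.mp h3
    rcases signCases (SignType.sign (u0 - v0)) with a1 | a1 | a1
    · have q1 := sign_eq_neg_one_iff.mp a1
      have q1' := sign_eq_neg_one_iff.mp (f1.trans a1)
      rcases signCases (SignType.sign (u0 + v0)) with a2 | a2 | a2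
      · have q2' := sign_eq_neg_one_iff.mp (f2.trans a2)
        rw [sign_eq_neg_one_iff.mpr (by linarith : u < 0),
          sign_eq_neg_one_iff.mpr h]
      · have q2 := sign_eq_zero_iff.mp a2
        have q2' := sign_eq_zero_iff.mp (f2.trans a2)
        rw [sign_eq_neg_one_iff.mpr (by linarith : u < 0),
          sign_eq_neg_one_iff.mpr h]
      · have q2 := sign_eq_one_iff.mp a2
        linarith
    · have q1 := sign_eq_zero_iff.mp a1
      have q1' := sign_eq_zero_iff.mp (f1.trans a1)
      have a2 : SignType.sign (u0 + v0) = -1 := sign_eq_neg_one_iff.mpr (by linarith)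
      have q2' := sign_eq_neg_one_iff.mp (f2.trans a2)
      rw [sign_eq_neg_one_iff.mpr (by linarith : u < 0), sign_eq_neg_one_iff.mpr h]
    · have q1 := sign_eq_one_iff.mp a1
      linarith
  · have hv0 : v0 = 0 := by
      rw [h] at h3; simpa using h3
    have a1 : SignType.sign (u0 - v0) = 0 := sign_eq_zero_iff.mpr (by rw [h, hv0]; ring)
    have a2 : SignType.sign (u0 + v0) = 0 := sign_eq_zero_iff.mpr (by rw [h, hv0]; ring)
    have q1' := sign_eq_zero_iff.mp (f1.trans a1)
    have q2' := sign_eq_zero_iff.mp (f2.trans a2)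
    rw [sign_eq_zero_iff.mpr (by linarith : u = 0), sign_eq_zero_iff.mpr h]
  · rw [abs_of_pos h] at h3
    obtain ⟨b1, b2⟩ := abs_le.mp h3
    rcases signCases (SignType.sign (u0 - v0)) with a1 | a1 | a1
    · have q1 := sign_eq_neg_one_iff.mp a1
      linarith
    · have q1 := sign_eq_zero_iff.mp a1
      have q1' := sign_eq_zero_iff.mp (f1.trans a1)
      have a2 : SignType.sign (u0 + v0) = 1 := sign_eq_one_iff.mpr (by linarith)
      have q2' := sign_eq_one_iff.mp (f2.trans a2)
      rw [sign_eq_one_iff.mpr (by linarith : 0 < u), sign_eq_one_iff.mpr h]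
    · have q1 := sign_eq_one_iff.mp a1
      have q1' := sign_eq_one_iff.mp (f1.trans a1)
      rcases signCases (SignType.sign (u0 + v0)) with a2 | a2 | a2
      · have q2 := sign_eq_neg_one_iff.mp a2
        linarith
      · have q2 := sign_eq_zero_iff.mp a2
        have q2' := sign_eq_zero_iff.mp (f2.trans a2)
        rw [sign_eq_one_iff.mpr (by linarith : 0 < u), sign_eq_one_iff.mpr h]
      · have q2' := sign_eq_one_iff.mp (f2.trans a2)
        rw [sign_eq_one_iff.mpr (by linarith : 0 < u), sign_eq_one_iff.mpr h]

/-- the sign of x i - x j is constant on a face (i ≠ j) -/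
lemma pattern_sub {n s : ℕ} {σ : Set (Fin n → ℝ)} (hσ : IsFace n (dns n s) σ)
    {i j : Fin n} (hij : i ≠ j) {x y : Fin n → ℝ} (hx : x ∈ σ) (hy : y ∈ σ) :
    SignType.sign (x i - x j) = SignType.sign (y i - y j) := by
  rcases lt_or_gt_of_ne hij with h | h
  · have ha : ((Pi.single i (1:ℝ) : Fin n → ℝ) - Pi.single j 1) ∈ dns n s :=
      Or.inl ⟨i, j, h, Or.inl rfl⟩
    have := sign_const hσ ha hx hy
    rwa [ip_single_sub, ip_single_sub] at this
  · have ha : ((Pi.single j (1:ℝ) : Fin n → ℝ) - Pi.single i 1) ∈ dns n s :=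
      Or.inl ⟨j, i, h, Or.inl rfl⟩
    have := sign_const hσ ha hx hy
    rw [ip_single_sub, ip_single_sub] at this
    have h2 : SignType.sign (-(x i - x j)) = SignType.sign (-(y i - y j)) := by
      rw [neg_sub, neg_sub]; exact this
    rw [Left.sign_neg, Left.sign_neg] at h2
    exact neg_injective h2

/-- the sign of x i + x j is constant on a face (i ≠ j) -/
lemma pattern_add {n s : ℕ} {σ : Set (Fin n → ℝ)} (hσ : IsFace n (dns n s) σ)
    {i j : Fin n} (hij : i ≠ j) {x y : Fin n → ℝ} (hx : x ∈ σ) (hy : y ∈ σ) :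
    SignType.sign (x i + x j) = SignType.sign (y i + y j) := by
  rcases lt_or_gt_of_ne hij with h | h
  · have ha : ((Pi.single i (1:ℝ) : Fin n → ℝ) + Pi.single j 1) ∈ dns n s :=
      Or.inl ⟨i, j, h, Or.inr rfl⟩
    have := sign_const hσ ha hx hy
    rwa [ip_single_add, ip_single_add] at this
  · have ha : ((Pi.single j (1:ℝ) : Fin n → ℝ) + Pi.single i 1) ∈ dns n s :=
      Or.inl ⟨j, i, h, Or.inr rfl⟩
    have := sign_const hσ ha hx hy
    rw [ip_single_add, ip_single_add] at this
    rw [add_comm (x i), add_comm (y i)]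
    exact this

/-- dominance: on a face cut by the coordinate hyperplane x_i = 0, every other
coordinate dominates coordinate i in absolute value, and has constant sign. -/
lemma dominance {n s : ℕ} {σ : Set (Fin n → ℝ)} (hσ : IsFace n (dns n s) σ)
    {i : Fin n} {x y : Fin n → ℝ} (hx : x ∈ σ) (hxi : 0 < x i)
    (hy : y ∈ σ) (hyi : y i < 0) :
    ∀ z ∈ σ, ∀ j, j ≠ i → |z i| < |z j| ∧ SignType.sign (z j) = SignType.sign (x j) := by
  intro z hz j hj
  have hij : i ≠ j := fun h => hj h.symm
  exact dom_core (pattern_sub hσ hij hx hy) (pattern_add hσ hij hx hy)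
    (pattern_sub hσ hij hz hx) (pattern_add hσ hij hz hx) hxi hyi

lemma sign_dom_sub' {u w : ℝ} (h : |u| < |w|) : SignType.sign (w - u) = SignType.sign w := by
  have h2 : SignType.sign (-(u - w)) = - SignType.sign (u - w) := Left.sign_neg _
  rw [neg_sub] at h2
  rw [h2, sign_dom_sub h, neg_neg]

/-- perturbation of the dominated coordinate within a face -/
lemma perturb {n s : ℕ} {σ : Set (Fin n → ℝ)} (hσ : IsFace n (dns n s) σ)
    {i : Fin n} (hi : s ≤ (i : ℕ)) {z : Fin n → ℝ} (hz : z ∈ σ)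
    (hzdom : ∀ j, j ≠ i → |z i| < |z j|) {δ : ℝ} (hδ : ∀ j, j ≠ i → |δ| < |z j|) :
    Function.update z i δ ∈ σ := by
  rw [faceEq hσ hz]
  intro a ha
  rcases dns_cases ha with ⟨p, q, hpq, hval⟩ | ⟨p, q, hpq, hval⟩ | ⟨k, hk, hval⟩
  · rw [hval, hval]
    by_cases hp : p = i
    · have hq : q ≠ i := by rw [← hp]; exact hpq.ne'
      rw [hp, Function.update_self, Function.update_of_ne hq]
      rw [sign_dom_sub (hδ q hq), sign_dom_sub (hzdom q hq)]
    · by_cases hq : q = i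
      · have hp' : p ≠ i := hp
        rw [hq, Function.update_self, Function.update_of_ne hp']
        rw [sign_dom_sub' (hδ p hp'), sign_dom_sub' (hzdom p hp')]
      · rw [Function.update_of_ne hp, Function.update_of_ne hq]
  · rw [hval, hval]
    by_cases hp : p = i
    · have hq : q ≠ i := by rw [← hp]; exact hpq.ne'
      rw [hp, Function.update_self, Function.update_of_ne hq]
      rw [sign_dom_add (hδ q hq), sign_dom_add (hzdom q hq)]
    · by_cases hq : q = i
      · have hp' : p ≠ i := hp
        rw [hq, Function.update_self, Function.update_of_ne hp']
        rw [add_comm (z p) δ, add_comm (z p) (z i)]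
        rw [sign_dom_add (hδ p hp'), sign_dom_add (hzdom p hp')]
      · rw [Function.update_of_ne hp, Function.update_of_ne hq]
  · rw [hval, hval]
    have hk' : k ≠ i := by
      intro h
      rw [h] at hk
      omega
    rw [Function.update_of_ne hk']

/-- trichotomy: a face is either cut by x_i = 0 or the sign of x_i is constant on it -/
lemma trichotomy {n s : ℕ} (hn : 2 ≤ n) {σ : Set (Fin n → ℝ)}
    (hσ : IsFace n (dns n s) σ) {i : Fin n} (hi : s ≤ (i : ℕ)) :
    ((∃ x ∈ σ, 0 < x i) ∧ (∃ y ∈ σ, y i < 0)) ∨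
      (∃ c, ∀ z ∈ σ, SignType.sign (z i) = c) := by
  obtain ⟨z₀, hz₀⟩ := hσ.1
  by_cases hd : ∀ j, j ≠ i → |z₀ i| < |z₀ j|
  · left
    have hne : ((Finset.univ : Finset (Fin n)).erase i).Nonempty := by
      rw [← Finset.card_pos, Finset.card_erase_of_mem (Finset.mem_univ i)]
      simp only [Finset.card_univ, Fintype.card_fin]
      omega
    set M := ((Finset.univ : Finset (Fin n)).erase i).inf' hne (fun j => |z₀ j|) with hMdef
    have hM : 0 < M := by
      rw [hMdef, Finset.lt_inf'_iff]
      intro j hjmem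
      exact lt_of_le_of_lt (abs_nonneg _) (hd j (Finset.ne_of_mem_erase hjmem))
    have hMle : ∀ j, j ≠ i → M ≤ |z₀ j| := by
      intro j hj
      exact Finset.inf'_le _ (Finset.mem_erase.mpr ⟨hj, Finset.mem_univ j⟩)
    have habs : |M / 2| < M := by
      rw [abs_of_pos (by linarith)]; linarith
    have habs' : |-(M / 2)| < M := by
      rw [abs_neg]; exact habs
    constructor
    · refine ⟨Function.update z₀ i (M/2),
        perturb hσ hi hz₀ hd (fun j hj => lt_of_lt_of_le habs (hMle j hj)), ?_⟩
      rw [Function.update_self]; linarith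
    · refine ⟨Function.update z₀ i (-(M/2)),
        perturb hσ hi hz₀ hd (fun j hj => lt_of_lt_of_le habs' (hMle j hj)), ?_⟩
      rw [Function.update_self]; linarith
  · right
    push_neg at hd
    obtain ⟨j, hj, hle⟩ := hd
    refine ⟨SignType.sign (z₀ i), fun z hz => ?_⟩
    have hij : i ≠ j := fun h => hj h.symm
    exact rigid_core (pattern_sub hσ hij hz hz₀) (pattern_add hσ hij hz hz₀) hle

def CutAt {n : ℕ} (i : Fin n) (σ : Set (Fin n → ℝ)) : Prop :=
  (∃ x ∈ σ, 0 < x i) ∧ (∃ x ∈ σ, x i < 0)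

/-- a nonempty sign-part of a face of dns n s is a face of dns n (s+1) -/
lemma part_face {n s : ℕ} {σ : Set (Fin n → ℝ)} (hσ : IsFace n (dns n s) σ)
    {i : Fin n} (hi : (i : ℕ) = s) (c : SignType)
    (hne : (σ ∩ {x | SignType.sign (x i) = c}).Nonempty) :
    IsFace n (dns n (s+1)) (σ ∩ {x | SignType.sign (x i) = c}) := by
  classical
  obtain ⟨x₀, hx₀σ, hx₀c⟩ := hne
  refine ⟨⟨x₀, hx₀σ, hx₀c⟩, fun a => if a = (Pi.single i (1:ℝ) : Fin n → ℝ) then c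
    else SignType.sign (ip a x₀), ?_⟩
  have hs : (Pi.single i (1:ℝ) : Fin n → ℝ) ∉ dns n s := single_not_mem_dns (le_of_eq hi.symm)
  ext x
  constructor
  · rintro ⟨hxσ, hxc⟩
    intro a ha
    rw [dns_succ i hi] at ha
    rcases ha with ha | ha
    · show SignType.sign (ip a x) =
        if a = (Pi.single i (1:ℝ) : Fin n → ℝ) then c else SignType.sign (ip a x₀)
      rw [if_neg (fun h : a = (Pi.single i (1:ℝ) : Fin n → ℝ) => hs (h ▸ ha))]
      exact sign_const hσ ha hxσ hx₀σ
    · simp only [Set.mem_singleton_iff] at ha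
      show SignType.sign (ip a x) =
        if a = (Pi.single i (1:ℝ) : Fin n → ℝ) then c else SignType.sign (ip a x₀)
      rw [if_pos ha, ha, ip_single]
      exact hxc
  · intro hx
    constructor
    · rw [faceEq hσ hx₀σ]
      intro a ha
      have h2 : SignType.sign (ip a x) =
          if a = (Pi.single i (1:ℝ) : Fin n → ℝ) then c else SignType.sign (ip a x₀) :=
        hx a (dns_succ i hi ▸ Or.inl ha)
      rwa [if_neg (fun h : a = (Pi.single i (1:ℝ) : Fin n → ℝ) => hs (h ▸ ha))] at h2
    · have h2 : SignType.sign (ip (Pi.single i (1:ℝ) : Fin n → ℝ) x) =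
          if (Pi.single i (1:ℝ) : Fin n → ℝ) = (Pi.single i (1:ℝ) : Fin n → ℝ) then c
          else SignType.sign (ip (Pi.single i (1:ℝ) : Fin n → ℝ) x₀) :=
        hx (Pi.single i (1:ℝ) : Fin n → ℝ) (dns_succ i hi ▸ Or.inr rfl)
      rw [if_pos rfl, ip_single] at h2
      exact h2

/-- a face on which the i-th sign is constant is a face of the refined arrangement -/
lemma const_face {n s : ℕ} {σ : Set (Fin n → ℝ)} (hσ : IsFace n (dns n s) σ)
    {i : Fin n} (hi : (i : ℕ) = s) {c : SignType}
    (hc : ∀ z ∈ σ, SignType.sign (z i) = c) :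
    IsFace n (dns n (s+1)) σ := by
  have heq : σ ∩ {x | SignType.sign (x i) = c} = σ :=
    Set.inter_eq_left.mpr (fun x hx => hc x hx)
  rw [← heq]
  exact part_face hσ hi c (heq.symm ▸ hσ.1)

/-- all three parts of a cut face are nonempty -/
lemma parts_nonempty {n s : ℕ} {σ : Set (Fin n → ℝ)} (hσ : IsFace n (dns n s) σ)
    {i : Fin n} (hi : s ≤ (i : ℕ)) (hcut : CutAt i σ) (c : SignType) :
    (σ ∩ {x | SignType.sign (x i) = c}).Nonempty := by
  obtain ⟨⟨x, hx, hxi⟩, ⟨y, hy, hyi⟩⟩ := hcut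
  have hdom := dominance hσ hx hxi hy hyi
  rcases signCases c with hc | hc | hc
  · exact ⟨y, hy, by
      show SignType.sign (y i) = c
      rw [hc, sign_eq_neg_one_iff]; exact hyi⟩
  · refine ⟨Function.update x i 0, perturb hσ hi hx (fun j hj => (hdom x hx j hj).1)
      (fun j hj => lt_of_le_of_lt (by rw [abs_zero]; exact abs_nonneg _)
        (hdom x hx j hj).1), ?_⟩
    show SignType.sign (Function.update x i 0 i) = c
    rw [hc, Function.update_self]
    simp
  · exact ⟨x, hx, by
      show SignType.sign (x i) = c
      rw [hc, sign_eq_one_iff]; exact hxi⟩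

/-- every face of dns n (s+1) is a sign-part of a face of dns n s -/
lemma face_restrict {n s : ℕ} {σ : Set (Fin n → ℝ)} (hσ : IsFace n (dns n (s+1)) σ)
    {i : Fin n} (hi : (i : ℕ) = s) {x₀ : Fin n → ℝ} (hx₀ : x₀ ∈ σ) :
    IsFace n (dns n s) {x | ∀ a ∈ dns n s, SignType.sign (ip a x) = SignType.sign (ip a x₀)} ∧
    σ = {x | ∀ a ∈ dns n s, SignType.sign (ip a x) = SignType.sign (ip a x₀)} ∩
      {x | SignType.sign (x i) = SignType.sign (x₀ i)} := by
  refine ⟨face_of_point _ x₀, ?_⟩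
  rw [faceEq hσ hx₀]
  ext x
  constructor
  · intro hx
    constructor
    · intro a ha
      exact hx a (dns_mono (Nat.le_succ s) ha)
    · have := hx (Pi.single i (1:ℝ) : Fin n → ℝ) (dns_succ i hi ▸ Or.inr rfl)
      rwa [ip_single, ip_single] at this
  · rintro ⟨hx1, hx2⟩
    intro a ha
    rw [dns_succ i hi] at ha
    rcases ha with ha | ha
    · exact hx1 a ha
    · simp only [Set.mem_singleton_iff] at ha
      rw [ha, ip_single, ip_single]
      exact hx2

lemma upd_sub_upd {n : ℕ} (z : Fin n → ℝ) (i : Fin n) (δ₁ δ₂ : ℝ) :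
    Function.update z i δ₁ - Function.update z i δ₂ =
      (δ₁ - δ₂) • (Pi.single i 1 : Fin n → ℝ) := by
  funext t
  by_cases h : t = i
  · subst h
    simp [Function.update_self, sval]
  · simp [Function.update_of_ne h, sval, h]

lemma upd_decomp {n : ℕ} (z : Fin n → ℝ) (i : Fin n) (δ : ℝ) :
    z = Function.update z i δ + (z i - δ) • (Pi.single i 1 : Fin n → ℝ) := by
  funext t
  by_cases h : t = i
  · subst h
    simp [Function.update_self, sval]
  · simp [Function.update_of_ne h, sval, h]

lemma minabs {n : ℕ} (hn : 2 ≤ n) (z : Fin n → ℝ) (i : Fin n)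
    (hdom : ∀ j, j ≠ i → |z i| < |z j|) :
    ∃ M : ℝ, 0 < M ∧ ∀ j, j ≠ i → M ≤ |z j| := by
  have hne : ((Finset.univ : Finset (Fin n)).erase i).Nonempty := by
    rw [← Finset.card_pos, Finset.card_erase_of_mem (Finset.mem_univ i)]
    simp only [Finset.card_univ, Fintype.card_fin]
    omega
  refine ⟨((Finset.univ : Finset (Fin n)).erase i).inf' hne (fun j => |z j|), ?_, ?_⟩
  · rw [Finset.lt_inf'_iff]
    intro j hjmem
    exact lt_of_le_of_lt (abs_nonneg _) (hdom j (Finset.ne_of_mem_erase hjmem))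
  · intro j hj
    exact Finset.inf'_le _ (Finset.mem_erase.mpr ⟨hj, Finset.mem_univ j⟩)

/-- the strictly-positive and strictly-negative parts of a cut face span the same space -/
lemma span_part_ne_zero {n s : ℕ} (hn : 2 ≤ n) {σ : Set (Fin n → ℝ)}
    (hσ : IsFace n (dns n s) σ) {i : Fin n} (hi : s ≤ (i : ℕ)) (hcut : CutAt i σ)
    {c : SignType} (hc : c ≠ 0) :
    Submodule.span ℝ (σ ∩ {x | SignType.sign (x i) = c}) = Submodule.span ℝ σ := by
  apply le_antisymm (Submodule.span_mono Set.inter_subset_left)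
  rw [Submodule.span_le]
  intro z hz
  obtain ⟨⟨xp, hxp, hxpi⟩, ⟨yp, hyp, hypi⟩⟩ := hcut
  have hdom : ∀ j, j ≠ i → |z i| < |z j| :=
    fun j hj => (dominance hσ hxp hxpi hyp hypi z hz j hj).1
  obtain ⟨M, hM, hMle⟩ := minabs hn z i hdom
  set sgn : ℝ := if c = 1 then 1 else -1 with hsgn
  have habs_sgn : |sgn| = 1 := by
    rw [hsgn]; split_ifs <;> simp
  have hmem : ∀ δ : ℝ, |δ| < M → Function.update z i δ ∈ σ :=
    fun δ hδ => perturb hσ hi hz hdom (fun j hj => lt_of_lt_of_le hδ (hMle j hj))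
  have hsignδ : ∀ δ : ℝ, 0 < δ → SignType.sign (sgn * δ) = c := by
    intro δ hδ
    rcases signCases c with h | h | h
    · rw [hsgn, if_neg (by rw [h]; decide), h, sign_eq_neg_one_iff]
      nlinarith
    · exact absurd h hc
    · rw [hsgn, if_pos h, h, sign_eq_one_iff]
      nlinarith
  have habsδ : ∀ δ : ℝ, 0 ≤ δ → |sgn * δ| = δ := by
    intro δ hδ
    rw [abs_mul, habs_sgn, one_mul, abs_of_nonneg hδ]
  have hz1 : Function.update z i (sgn * (M/2)) ∈ σ ∩ {x | SignType.sign (x i) = c} := by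
    refine ⟨hmem _ (by rw [habsδ _ (by linarith)]; linarith), ?_⟩
    show SignType.sign (Function.update z i (sgn * (M/2)) i) = c
    rw [Function.update_self]
    exact hsignδ _ (by linarith)
  have hz2 : Function.update z i (sgn * (M/4)) ∈ σ ∩ {x | SignType.sign (x i) = c} := by
    refine ⟨hmem _ (by rw [habsδ _ (by linarith)]; linarith), ?_⟩
    show SignType.sign (Function.update z i (sgn * (M/4)) i) = c
    rw [Function.update_self]
    exact hsignδ _ (by linarith)
  have hediff : sgn * (M/2) - sgn * (M/4) ≠ 0 := by
    rcases signCases c with h | h | h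
    · rw [hsgn, if_neg (by rw [h]; decide)]; nlinarith
    · exact absurd h hc
    · rw [hsgn, if_pos h]; nlinarith
  have hespan : (Pi.single i 1 : Fin n → ℝ) ∈
      Submodule.span ℝ (σ ∩ {x | SignType.sign (x i) = c}) := by
    have hsub : Function.update z i (sgn * (M/2)) - Function.update z i (sgn * (M/4)) ∈
        Submodule.span ℝ (σ ∩ {x | SignType.sign (x i) = c}) :=
      Submodule.sub_mem _ (Submodule.subset_span hz1) (Submodule.subset_span hz2)
    rw [upd_sub_upd] at hsub
    have := Submodule.smul_mem _ (sgn * (M/2) - sgn * (M/4))⁻¹ hsub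
    rwa [smul_smul, inv_mul_cancel₀ hediff, one_smul] at this
  show z ∈ Submodule.span ℝ (σ ∩ {x | SignType.sign (x i) = c})
  rw [upd_decomp z i (sgn * (M/2))]
  exact Submodule.add_mem _ (Submodule.subset_span hz1) (Submodule.smul_mem _ _ hespan)

/-- the zero part of a cut face has rank one less -/
lemma dim_zero_part {n s : ℕ} (hn : 2 ≤ n) {σ : Set (Fin n → ℝ)}
    (hσ : IsFace n (dns n s) σ) {i : Fin n} (hi : s ≤ (i : ℕ)) (hcut : CutAt i σ) :
    Module.finrank ℝ ↥(Submodule.span ℝ σ) =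
      Module.finrank ℝ ↥(Submodule.span ℝ (σ ∩ {x | SignType.sign (x i) = 0})) + 1 := by
  obtain ⟨⟨xp, hxp, hxpi⟩, ⟨yp, hyp, hypi⟩⟩ := hcut
  obtain ⟨z, hz⟩ := hσ.1
  have hdom : ∀ j, j ≠ i → |z i| < |z j| :=
    fun j hj => (dominance hσ hxp hxpi hyp hypi z hz j hj).1
  obtain ⟨M, hM, hMle⟩ := minabs hn z i hdom
  have hmem : ∀ δ : ℝ, |δ| < M → Function.update z i δ ∈ σ :=
    fun δ hδ => perturb hσ hi hz hdom (fun j hj => lt_of_lt_of_le hδ (hMle j hj))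
  set P0 := σ ∩ {x | SignType.sign (x i) = 0} with hP0
  have hz0 : Function.update z i 0 ∈ P0 := by
    refine ⟨hmem 0 (by rw [abs_zero]; exact hM), ?_⟩
    show SignType.sign (Function.update z i 0 i) = 0
    rw [Function.update_self]
    simp
  have hespan : (Pi.single i 1 : Fin n → ℝ) ∈ Submodule.span ℝ σ := by
    have h1 : Function.update z i (M/2) ∈ σ := hmem _ (by rw [abs_of_pos (by linarith)]; linarith)
    have h2 : Function.update z i (M/4) ∈ σ := hmem _ (by rw [abs_of_pos (by linarith)]; linarith)
    have hsub : Function.update z i (M/2) - Function.update z i (M/4) ∈ Submodule.span ℝ σ :=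
      Submodule.sub_mem _ (Submodule.subset_span h1) (Submodule.subset_span h2)
    rw [upd_sub_upd] at hsub
    have := Submodule.smul_mem _ (M/2 - M/4)⁻¹ hsub
    rwa [smul_smul, inv_mul_cancel₀ (by linarith), one_smul] at this
  have hP0sub : ∀ x ∈ P0, x i = 0 := by
    rintro x ⟨-, hx⟩
    exact sign_eq_zero_iff.mp hx
  have hsup : Submodule.span ℝ σ =
      Submodule.span ℝ P0 ⊔ Submodule.span ℝ {(Pi.single i 1 : Fin n → ℝ)} := by
    apply le_antisymm
    · rw [Submodule.span_le]
      intro w hw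
      show w ∈ Submodule.span ℝ P0 ⊔ Submodule.span ℝ {(Pi.single i 1 : Fin n → ℝ)}
      have hw0 : Function.update w i 0 ∈ P0 := by
        have hdomw : ∀ j, j ≠ i → |w i| < |w j| :=
          fun j hj => (dominance hσ hxp hxpi hyp hypi w hw j hj).1
        refine ⟨perturb hσ hi hw hdomw (fun j hj =>
          lt_of_le_of_lt (by rw [abs_zero]; exact abs_nonneg _) (hdomw j hj)), ?_⟩
        show SignType.sign (Function.update w i 0 i) = 0
        rw [Function.update_self]
        simp
      rw [upd_decomp w i 0]
      refine Submodule.add_mem _ (Submodule.mem_sup_left (Submodule.subset_span hw0)) ?_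
      exact Submodule.mem_sup_right (Submodule.smul_mem _ _
        (Submodule.subset_span (Set.mem_singleton _)))
    · apply sup_le
      · exact Submodule.span_mono Set.inter_subset_left
      · rw [Submodule.span_le, Set.singleton_subset_iff]
        exact hespan
  have hinf : Submodule.span ℝ P0 ⊓ Submodule.span ℝ {(Pi.single i 1 : Fin n → ℝ)} = ⊥ := by
    rw [eq_bot_iff]
    intro x hx
    rw [Submodule.mem_inf] at hx
    obtain ⟨h1, h2⟩ := hx
    rw [Submodule.mem_span_singleton] at h2
    obtain ⟨cc, rfl⟩ := h2
    have hx0 : (cc • (Pi.single i 1 : Fin n → ℝ)) i = 0 := by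
      have hker : Submodule.span ℝ P0 ≤ LinearMap.ker (LinearMap.proj i :
          (Fin n → ℝ) →ₗ[ℝ] ℝ) := by
        rw [Submodule.span_le]
        intro x hx
        rw [SetLike.mem_coe, LinearMap.mem_ker]
        exact hP0sub x hx
      exact hker h1
    rw [Pi.smul_apply, sval, if_pos rfl, smul_eq_mul, mul_one] at hx0
    rw [hx0, zero_smul]
    exact Submodule.zero_mem ⊥
  have hrank := Submodule.finrank_sup_add_finrank_inf_eq (Submodule.span ℝ P0)
    (Submodule.span ℝ {(Pi.single i 1 : Fin n → ℝ)})
  rw [hinf, finrank_bot, add_zero, finrank_span_singleton (single_ne_zero' i)] at hrank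
  rw [hsup, hrank]

/-- two faces sharing a point coincide -/
lemma faces_eq_of_common_point {n : ℕ} {A σ τ : Set (Fin n → ℝ)}
    (hσ : IsFace n A σ) (hτ : IsFace n A τ) {pt : Fin n → ℝ}
    (h1 : pt ∈ σ) (h2 : pt ∈ τ) : σ = τ := by
  rw [faceEq hσ h1, faceEq hτ h2]

lemma not_cut_of_const {n : ℕ} {i : Fin n} {σ : Set (Fin n → ℝ)}
    {c : SignType} (hc : ∀ z ∈ σ, SignType.sign (z i) = c) : ¬ CutAt i σ := by
  rintro ⟨⟨x, hx, hxi⟩, ⟨y, hy, hyi⟩⟩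
  have h1 := hc x hx
  have h2 := hc y hy
  rw [sign_eq_one_iff.mpr hxi] at h1
  rw [sign_eq_neg_one_iff.mpr hyi] at h2
  rw [← h1] at h2
  exact absurd h2 (by decide)

def NCAt {n : ℕ} (i : Fin n) (σ : Set (Fin n → ℝ)) : Prop :=
  ∃ c, ∀ z ∈ σ, SignType.sign (z i) = c

abbrev FaceD (n s d : ℕ) :=
  {σ : Set (Fin n → ℝ) // IsFace n (dns n s) σ ∧ Module.finrank ℝ ↥(Submodule.span ℝ σ) = d}

abbrev SubNC (n s : ℕ) (i : Fin n) (e : ℕ) :=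
  {σ : Set (Fin n → ℝ) //
    IsFace n (dns n s) σ ∧ Module.finrank ℝ ↥(Submodule.span ℝ σ) = e ∧ NCAt i σ}

abbrev SubC (n s : ℕ) (i : Fin n) (e : ℕ) :=
  {σ : Set (Fin n → ℝ) //
    IsFace n (dns n s) σ ∧ Module.finrank ℝ ↥(Submodule.span ℝ σ) = e ∧ CutAt i σ}

def cnum (n s : ℕ) (i : Fin n) (e : ℕ) : ℕ := Nat.card (SubC n s i e)

def ncnum (n s : ℕ) (i : Fin n) (e : ℕ) : ℕ := Nat.card (SubNC n s i e)

instance finSubNC (n s : ℕ) (i : Fin n) (e : ℕ) : Finite (SubNC n s i e) :=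
  face_sub_finite (dns_finite n s) _

instance finSubC (n s : ℕ) (i : Fin n) (e : ℕ) : Finite (SubC n s i e) :=
  face_sub_finite (dns_finite n s) _

instance finFaceD (n s d : ℕ) : Finite (FaceD n s d) :=
  face_sub_finite (dns_finite n s) _

lemma fnum_eq_card (n s d : ℕ) : fnum n (dns n s) d = Nat.card (FaceD n s d) := rfl

lemma fnum_base {n s : ℕ} (hn : 2 ≤ n) {i : Fin n} (hi : s ≤ (i : ℕ)) (d : ℕ) :
    fnum n (dns n s) d = ncnum n s i d + cnum n s i d := by
  rw [fnum_eq_card, ncnum, cnum, ← Nat.card_sum]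
  apply Nat.card_congr
  apply Equiv.symm
  refine Equiv.ofBijective (fun w => match w with
    | Sum.inl τ => (⟨τ.1, τ.2.1, τ.2.2.1⟩ : FaceD n s d)
    | Sum.inr τ => (⟨τ.1, τ.2.1, τ.2.2.1⟩ : FaceD n s d)) ⟨?_, ?_⟩
  · rintro (τ | τ) (τ' | τ') h <;> simp only [Subtype.mk.injEq] at h
    · exact congrArg Sum.inl (Subtype.ext h)
    · exfalso
      obtain ⟨c, hc⟩ := τ.2.2.2
      exact not_cut_of_const hc (h ▸ τ'.2.2.2)
    · exfalso
      obtain ⟨c, hc⟩ := τ'.2.2.2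
      exact not_cut_of_const hc (h.symm ▸ τ.2.2.2)
    · exact congrArg Sum.inr (Subtype.ext h)
  · rintro ⟨σ, hσ, hd⟩
    rcases trichotomy hn hσ hi with hcut | hconst
    · exact ⟨Sum.inr ⟨σ, hσ, hd, hcut⟩, rfl⟩
    · exact ⟨Sum.inl ⟨σ, hσ, hd, hconst⟩, rfl⟩

/-- component maps sending tagged faces of dns n s to faces of dns n (s+1) -/
noncomputable def mapNC {n s : ℕ} {i : Fin n} (hi : (i : ℕ) = s) {d : ℕ}
    (τ : SubNC n s i d) : FaceD n (s+1) d :=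
  ⟨τ.1, const_face τ.2.1 hi τ.2.2.2.choose_spec, τ.2.2.1⟩

noncomputable def mapPos {n s : ℕ} (hn : 2 ≤ n) {i : Fin n} (hi : (i : ℕ) = s) {d : ℕ}
    (τ : SubC n s i d) : FaceD n (s+1) d :=
  ⟨τ.1 ∩ {x | SignType.sign (x i) = 1},
    part_face τ.2.1 hi 1 (parts_nonempty τ.2.1 (le_of_eq hi.symm) τ.2.2.2 1),
    by rw [span_part_ne_zero hn τ.2.1 (le_of_eq hi.symm) τ.2.2.2 (c := 1) (by decide)]
       exact τ.2.2.1⟩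

noncomputable def mapNeg {n s : ℕ} (hn : 2 ≤ n) {i : Fin n} (hi : (i : ℕ) = s) {d : ℕ}
    (τ : SubC n s i d) : FaceD n (s+1) d :=
  ⟨τ.1 ∩ {x | SignType.sign (x i) = -1},
    part_face τ.2.1 hi (-1) (parts_nonempty τ.2.1 (le_of_eq hi.symm) τ.2.2.2 (-1)),
    by rw [span_part_ne_zero hn τ.2.1 (le_of_eq hi.symm) τ.2.2.2 (c := -1) (by decide)]
       exact τ.2.2.1⟩

noncomputable def mapZero {n s : ℕ} (hn : 2 ≤ n) {i : Fin n} (hi : (i : ℕ) = s) {d : ℕ}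
    (τ : SubC n s i (d+1)) : FaceD n (s+1) d :=
  ⟨τ.1 ∩ {x | SignType.sign (x i) = 0},
    part_face τ.2.1 hi 0 (parts_nonempty τ.2.1 (le_of_eq hi.symm) τ.2.2.2 0),
    Nat.succ_injective ((dim_zero_part hn τ.2.1 (le_of_eq hi.symm) τ.2.2.2).symm.trans τ.2.2.1)⟩

noncomputable def sMap {n s : ℕ} (hn : 2 ≤ n) {i : Fin n} (hi : (i : ℕ) = s) (d : ℕ) :
    (SubNC n s i d ⊕ (SubC n s i d ⊕ (SubC n s i d ⊕ SubC n s i (d+1)))) → FaceD n (s+1) d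
  | Sum.inl τ => mapNC hi τ
  | Sum.inr (Sum.inl τ) => mapPos hn hi τ
  | Sum.inr (Sum.inr (Sum.inl τ)) => mapNeg hn hi τ
  | Sum.inr (Sum.inr (Sum.inr τ)) => mapZero hn hi τ

lemma part_inj_same {n s : ℕ} {i : Fin n} {τ τ' : Set (Fin n → ℝ)}
    (hτ : IsFace n (dns n s) τ) (hτ' : IsFace n (dns n s) τ') (hi : s ≤ (i : ℕ))
    (hcut : CutAt i τ) (c : SignType)
    (h : τ ∩ {x | SignType.sign (x i) = c} = τ' ∩ {x | SignType.sign (x i) = c}) : τ = τ' := by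
  obtain ⟨pt, hpt⟩ := parts_nonempty hτ hi hcut c
  have hpt' := h ▸ hpt
  exact faces_eq_of_common_point hτ hτ' hpt.1 hpt'.1

lemma part_inj_diff {n s : ℕ} {i : Fin n} {τ τ' : Set (Fin n → ℝ)}
    (hτ : IsFace n (dns n s) τ) (hi : s ≤ (i : ℕ)) (hcut : CutAt i τ) {c c' : SignType}
    (hcc : c ≠ c')
    (h : τ ∩ {x | SignType.sign (x i) = c} = τ' ∩ {x | SignType.sign (x i) = c'}) : False := by
  obtain ⟨pt, hpt⟩ := parts_nonempty hτ hi hcut c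
  have hpt' := h ▸ hpt
  exact hcc (hpt.2.symm.trans hpt'.2)

lemma nc_part_absurd {n s : ℕ} {i : Fin n} {τ τ' : Set (Fin n → ℝ)}
    (hτ : IsFace n (dns n s) τ) (hτ' : IsFace n (dns n s) τ')
    (hNC : NCAt i τ) (hcut' : CutAt i τ') (c : SignType)
    (h : τ = τ' ∩ {x | SignType.sign (x i) = c}) : False := by
  have hsub : τ ⊆ τ' := by rw [h]; exact Set.inter_subset_left
  obtain ⟨pt, hpt⟩ := hτ.1
  have heq : τ = τ' := faces_eq_of_common_point hτ hτ' hpt (hsub hpt)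
  obtain ⟨cc, hcc⟩ := hNC
  exact not_cut_of_const hcc (heq ▸ hcut')

lemma sMap_bijective {n s : ℕ} (hn : 2 ≤ n) {i : Fin n} (hi : (i : ℕ) = s) (d : ℕ) :
    Function.Bijective (sMap hn hi d) := by
  have hi' : s ≤ (i : ℕ) := le_of_eq hi.symm
  constructor
  · rintro (τ | τ | τ | τ) (τ' | τ' | τ' | τ') h <;>
      simp only [sMap] at h <;>
      have hv := congrArg Subtype.val h <;>
      simp only [mapNC, mapPos, mapNeg, mapZero] at hv
    · exact congrArg Sum.inl (Subtype.ext hv)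
    · exact absurd hv.symm (fun hh => nc_part_absurd τ.2.1 τ'.2.1 τ.2.2.2 τ'.2.2.2 _ hh.symm)
    · exact absurd hv.symm (fun hh => nc_part_absurd τ.2.1 τ'.2.1 τ.2.2.2 τ'.2.2.2 _ hh.symm)
    · exact absurd hv.symm (fun hh => nc_part_absurd τ.2.1 τ'.2.1 τ.2.2.2 τ'.2.2.2 _ hh.symm)
    · exact absurd hv (fun hh => nc_part_absurd τ'.2.1 τ.2.1 τ'.2.2.2 τ.2.2.2 _ hh.symm)
    · exact congrArg (Sum.inr ∘ Sum.inl)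
        (Subtype.ext (part_inj_same τ.2.1 τ'.2.1 hi' τ.2.2.2 1 hv))
    · exact absurd (part_inj_diff τ.2.1 hi' τ.2.2.2 (by decide) hv) id
    · exact absurd (part_inj_diff τ.2.1 hi' τ.2.2.2 (by decide) hv) id
    · exact absurd hv (fun hh => nc_part_absurd τ'.2.1 τ.2.1 τ'.2.2.2 τ.2.2.2 _ hh.symm)
    · exact absurd (part_inj_diff τ.2.1 hi' τ.2.2.2 (by decide) hv) id
    · exact congrArg (Sum.inr ∘ Sum.inr ∘ Sum.inl)
        (Subtype.ext (part_inj_same τ.2.1 τ'.2.1 hi' τ.2.2.2 (-1) hv))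
    · exact absurd (part_inj_diff τ.2.1 hi' τ.2.2.2 (by decide) hv) id
    · exact absurd hv (fun hh => nc_part_absurd τ'.2.1 τ.2.1 τ'.2.2.2 τ.2.2.2 _ hh.symm)
    · exact absurd (part_inj_diff τ.2.1 hi' τ.2.2.2 (by decide) hv) id
    · exact absurd (part_inj_diff τ.2.1 hi' τ.2.2.2 (by decide) hv) id
    · exact congrArg (Sum.inr ∘ Sum.inr ∘ Sum.inr)
        (Subtype.ext (part_inj_same τ.2.1 τ'.2.1 hi' τ.2.2.2 0 hv))
  · rintro ⟨σ, hσ, hd⟩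
    obtain ⟨x₀, hx₀⟩ := hσ.1
    obtain ⟨hτface, hσeq⟩ := face_restrict hσ hi hx₀
    have hx₀τ : x₀ ∈ {x | ∀ a ∈ dns n s,
        SignType.sign (ip a x) = SignType.sign (ip a x₀)} := fun a ha => rfl
    rcases trichotomy hn hτface hi' with hcut | hconst
    · rcases signCases (SignType.sign (x₀ i)) with hc | hc | hc <;> rw [hc] at hσeq
      · refine ⟨Sum.inr (Sum.inr (Sum.inl ⟨_, hτface, ?_, hcut⟩)), ?_⟩
        · rw [← span_part_ne_zero hn hτface hi' hcut (c := -1) (by decide), ← hσeq]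
          exact hd
        · apply Subtype.ext
          show _ ∩ _ = σ
          exact hσeq.symm
      · refine ⟨Sum.inr (Sum.inr (Sum.inr ⟨_, hτface, ?_, hcut⟩)), ?_⟩
        · have hzp := dim_zero_part hn hτface hi' hcut
          rw [← hσeq, hd] at hzp
          exact hzp
        · apply Subtype.ext
          show _ ∩ _ = σ
          exact hσeq.symm
      · refine ⟨Sum.inr (Sum.inl ⟨_, hτface, ?_, hcut⟩), ?_⟩
        · rw [← span_part_ne_zero hn hτface hi' hcut (c := 1) (by decide), ← hσeq]
          exact hd
        · apply Subtype.ext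
          show _ ∩ _ = σ
          exact hσeq.symm
    · obtain ⟨c', hc'⟩ := hconst
      have hcx₀ : SignType.sign (x₀ i) = c' := hc' x₀ hx₀τ
      have hττ : {x | ∀ a ∈ dns n s, SignType.sign (ip a x) = SignType.sign (ip a x₀)} ∩
          {x | SignType.sign (x i) = SignType.sign (x₀ i)} =
          {x | ∀ a ∈ dns n s, SignType.sign (ip a x) = SignType.sign (ip a x₀)} :=
        Set.inter_eq_left.mpr (fun z hz => by
          show SignType.sign (z i) = SignType.sign (x₀ i)
          rw [hc' z hz, hcx₀])
      have hστ : σ = _ := hσeq.trans hττ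
      refine ⟨Sum.inl ⟨_, hτface, by rw [← hστ]; exact hd, ⟨c', hc'⟩⟩, ?_⟩
      apply Subtype.ext
      exact hστ.symm

/-- the splitting lemma -/
lemma fnum_succ {n s : ℕ} (hn : 2 ≤ n) {i : Fin n} (hi : (i : ℕ) = s) (d : ℕ) :
    fnum n (dns n (s+1)) d = fnum n (dns n s) d + cnum n s i d + cnum n s i (d+1) := by
  have key : fnum n (dns n (s+1)) d =
      ncnum n s i d + (cnum n s i d + (cnum n s i d + cnum n s i (d+1))) := by
    rw [fnum_eq_card, ncnum, cnum, cnum, ← Nat.card_sum, ← Nat.card_sum, ← Nat.card_sum]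
    exact (Nat.card_congr (Equiv.ofBijective _ (sMap_bijective hn hi d))).symm
  rw [key, fnum_base hn (le_of_eq hi.symm) d]
  omega

lemma ip_neg {n : ℕ} (b x : Fin n → ℝ) : ip (-b) x = -(ip b x) := by
  unfold ip
  rw [← Finset.sum_neg_distrib]
  congr 1
  funext t
  simp

lemma ip_perm {n : ℕ} (π : Equiv.Perm (Fin n)) (a x : Fin n → ℝ) :
    ip a (fun t => x (π t)) = ip (fun u => a (π.symm u)) x := by
  unfold ip
  rw [← Equiv.sum_comp π (fun u => a (π.symm u) * x u)]
  simp

lemma comp_single {n : ℕ} (π : Equiv.Perm (Fin n)) (p : Fin n) :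
    (fun t => (Pi.single p (1:ℝ) : Fin n → ℝ) (π t)) = Pi.single (π.symm p) 1 := by
  funext t
  rw [Pi.single_apply, Pi.single_apply, if_congr (Equiv.apply_eq_iff_eq_symm_apply π) rfl rfl]

/-- dns is stable (up to sign) under swapping two coordinates of index ≥ s -/
lemma dns_swap {n s : ℕ} {i i' : Fin n} (hi : s ≤ (i : ℕ)) (hi' : s ≤ (i' : ℕ))
    {a : Fin n → ℝ} (ha : a ∈ dns n s) :
    ∃ b ∈ dns n s, (fun t => a (Equiv.swap i i' t)) = b ∨
      (fun t => a (Equiv.swap i i' t)) = -b := by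
  set π := Equiv.swap i i' with hπ
  have hπsymm : π.symm = π := Equiv.symm_swap i i'
  rcases ha with ⟨p, q, hpq, h | h⟩ | ⟨k, hk, h⟩
  · -- minus type
    have hcomp : (fun t => a (π t)) =
        (Pi.single (π p) (1:ℝ) : Fin n → ℝ) - Pi.single (π q) 1 := by
      funext t
      rw [h]
      have h1 := congrFun (comp_single π p) t
      have h2 := congrFun (comp_single π q) t
      simp only [Pi.sub_apply]
      rw [h1, h2, hπsymm]
    have hne : π p ≠ π q := fun hh => hpq.ne (π.injective hh)
    rcases lt_or_gt_of_ne hne with hlt | hgt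
    · exact ⟨_, Or.inl ⟨π p, π q, hlt, Or.inl rfl⟩, Or.inl hcomp⟩
    · refine ⟨(Pi.single (π q) (1:ℝ) : Fin n → ℝ) - Pi.single (π p) 1,
        Or.inl ⟨π q, π p, hgt, Or.inl rfl⟩, Or.inr ?_⟩
      rw [hcomp]
      funext t
      simp only [Pi.sub_apply, Pi.neg_apply]
      ring
  · -- plus type
    have hcomp : (fun t => a (π t)) =
        (Pi.single (π p) (1:ℝ) : Fin n → ℝ) + Pi.single (π q) 1 := by
      funext t
      rw [h]
      have h1 := congrFun (comp_single π p) t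
      have h2 := congrFun (comp_single π q) t
      simp only [Pi.add_apply]
      rw [h1, h2, hπsymm]
    have hne : π p ≠ π q := fun hh => hpq.ne (π.injective hh)
    rcases lt_or_gt_of_ne hne with hlt | hgt
    · exact ⟨_, Or.inl ⟨π p, π q, hlt, Or.inr rfl⟩, Or.inl hcomp⟩
    · refine ⟨(Pi.single (π q) (1:ℝ) : Fin n → ℝ) + Pi.single (π p) 1,
        Or.inl ⟨π q, π p, hgt, Or.inr rfl⟩, Or.inl ?_⟩
      rw [hcomp]
      funext t
      simp only [Pi.add_apply]
      ring
  · -- coordinate type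
    have hki : k ≠ i := fun hh => by rw [hh] at hk; omega
    have hki' : k ≠ i' := fun hh => by rw [hh] at hk; omega
    have hcomp : (fun t => a (π t)) = (Pi.single k (1:ℝ) : Fin n → ℝ) := by
      funext t
      rw [h]
      have h1 := congrFun (comp_single π k) t
      rw [h1, hπsymm, hπ, Equiv.swap_apply_of_ne_of_ne hki hki']
    exact ⟨_, Or.inr ⟨k, hk, rfl⟩, Or.inl hcomp⟩

def permEquiv {n : ℕ} (π : Equiv.Perm (Fin n)) : (Fin n → ℝ) ≃ₗ[ℝ] (Fin n → ℝ) where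
  toFun := fun x => fun t => x (π t)
  invFun := fun x => fun t => x (π.symm t)
  map_add' := fun _ _ => rfl
  map_smul' := fun _ _ => rfl
  left_inv := fun x => by funext t; simp
  right_inv := fun x => by funext t; simp

lemma permEquiv_apply {n : ℕ} (π : Equiv.Perm (Fin n)) (x : Fin n → ℝ) :
    permEquiv π x = fun t => x (π t) := rfl

/-- the image of a face under the swap of two coordinates of index ≥ s is a face -/
lemma face_image {n s : ℕ} {i i' : Fin n} (hi : s ≤ (i : ℕ)) (hi' : s ≤ (i' : ℕ))
    {σ : Set (Fin n → ℝ)} (hσ : IsFace n (dns n s) σ) :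
    IsFace n (dns n s) (⇑(permEquiv (Equiv.swap i i')) '' σ) := by
  set π := Equiv.swap i i' with hπdef
  have hπsymm : π.symm = π := Equiv.symm_swap i i'
  have hππ : ∀ t, π (π t) = t := fun t => Equiv.swap_apply_self i i' t
  obtain ⟨x₀, hx₀⟩ := hσ.1
  refine ⟨⟨(fun t => x₀ (π t)), ⟨x₀, hx₀, rfl⟩⟩,
    fun a => SignType.sign (ip a (fun t => x₀ (π t))), ?_⟩
  ext y
  constructor
  · rintro ⟨x, hx, rfl⟩ a ha
    show SignType.sign (ip a (fun t => x (π t))) = SignType.sign (ip a (fun t => x₀ (π t)))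
    rw [ip_perm, ip_perm, hπsymm]
    obtain ⟨b, hb, heq | heq⟩ := dns_swap hi hi' ha
    · rw [heq]
      exact sign_const hσ hb hx hx₀
    · rw [heq, ip_neg, ip_neg, Left.sign_neg, Left.sign_neg]
      rw [sign_const hσ hb hx hx₀]
  · intro hy
    refine ⟨fun t => y (π t), ?_, ?_⟩
    · rw [faceEq hσ hx₀]
      intro a ha
      show SignType.sign (ip a (fun t => y (π t))) = SignType.sign (ip a x₀)
      rw [ip_perm, hπsymm]
      obtain ⟨b, hb, heq | heq⟩ := dns_swap hi hi' ha
      · rw [heq]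
        have h1 : SignType.sign (ip b y) = SignType.sign (ip b (fun t => x₀ (π t))) := hy b hb
        rw [ip_perm, hπsymm] at h1
        have h2 : (fun u => b (π u)) = a := by
          funext u
          have h3 := congrFun heq (π u)
          rw [hππ] at h3
          rw [← h3]
        rw [h2] at h1
        exact h1
      · rw [heq, ip_neg, Left.sign_neg]
        have h1 : SignType.sign (ip b y) = SignType.sign (ip b (fun t => x₀ (π t))) := hy b hb
        rw [ip_perm, hπsymm] at h1
        have h2 : (fun u => b (π u)) = -a := by
          funext u
          have h3 := congrFun heq (π u)
          simp only [Pi.neg_apply] at h3 ⊢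
          rw [hππ] at h3
          linarith
        rw [h2, ip_neg, Left.sign_neg] at h1
        rw [h1, neg_neg]
    · funext t
      show y (π (π t)) = y t
      rw [hππ]

lemma image_image_swap {n : ℕ} (i i' : Fin n) (σ : Set (Fin n → ℝ)) :
    ⇑(permEquiv (Equiv.swap i i')) '' (⇑(permEquiv (Equiv.swap i i')) '' σ) = σ := by
  rw [← Set.image_comp]
  have hcomp : ⇑(permEquiv (Equiv.swap i i')) ∘ ⇑(permEquiv (Equiv.swap i i')) = id := by
    funext x
    show (fun t => x ((Equiv.swap i i') ((Equiv.swap i i') t))) = x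
    funext t
    rw [Equiv.swap_apply_self]
  rw [hcomp, Set.image_id]

lemma rank_image_swap {n : ℕ} (i i' : Fin n) (σ : Set (Fin n → ℝ)) :
    Module.finrank ℝ ↥(Submodule.span ℝ (⇑(permEquiv (Equiv.swap i i')) '' σ)) =
      Module.finrank ℝ ↥(Submodule.span ℝ σ) := by
  rw [show ⇑(permEquiv (Equiv.swap i i')) =
    ⇑((permEquiv (Equiv.swap i i') : (Fin n → ℝ) →ₗ[ℝ] (Fin n → ℝ))) from
      (LinearEquiv.coe_coe _).symm, Submodule.span_image]
  exact LinearEquiv.finrank_map_eq _ _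

lemma cut_image_swap {n : ℕ} {i i' : Fin n} {σ : Set (Fin n → ℝ)} (h : CutAt i σ) :
    CutAt i' (⇑(permEquiv (Equiv.swap i i')) '' σ) := by
  obtain ⟨⟨x, hx, hxi⟩, ⟨y, hy, hyi⟩⟩ := h
  constructor
  · refine ⟨_, Set.mem_image_of_mem _ hx, ?_⟩
    show 0 < x ((Equiv.swap i i') i')
    rw [Equiv.swap_apply_right]
    exact hxi
  · refine ⟨_, Set.mem_image_of_mem _ hy, ?_⟩
    show y ((Equiv.swap i i') i') < 0
    rw [Equiv.swap_apply_right]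
    exact hyi

lemma cut_image_swap' {n : ℕ} {i i' : Fin n} {σ : Set (Fin n → ℝ)} (h : CutAt i' σ) :
    CutAt i (⇑(permEquiv (Equiv.swap i i')) '' σ) := by
  obtain ⟨⟨x, hx, hxi⟩, ⟨y, hy, hyi⟩⟩ := h
  constructor
  · refine ⟨_, Set.mem_image_of_mem _ hx, ?_⟩
    show 0 < x ((Equiv.swap i i') i)
    rw [Equiv.swap_apply_left]
    exact hxi
  · refine ⟨_, Set.mem_image_of_mem _ hy, ?_⟩
    show y ((Equiv.swap i i') i) < 0
    rw [Equiv.swap_apply_left]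
    exact hyi

/-- swapping the cut coordinate: cnum is independent of the choice of coordinate ≥ s -/
lemma cnum_swap {n s : ℕ} {i i' : Fin n} (hi : s ≤ (i : ℕ)) (hi' : s ≤ (i' : ℕ)) (e : ℕ) :
    cnum n s i e = cnum n s i' e := by
  apply Nat.card_congr
  exact {
    toFun := fun σ => ⟨⇑(permEquiv (Equiv.swap i i')) '' σ.1,
      face_image hi hi' σ.2.1,
      (rank_image_swap i i' σ.1).trans σ.2.2.1,
      cut_image_swap σ.2.2.2⟩
    invFun := fun τ => ⟨⇑(permEquiv (Equiv.swap i i')) '' τ.1,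
      face_image hi hi' τ.2.1,
      (rank_image_swap i i' τ.1).trans τ.2.2.1,
      cut_image_swap' τ.2.2.2⟩
    left_inv := fun σ => Subtype.ext (image_image_swap i i' σ.1)
    right_inv := fun τ => Subtype.ext (image_image_swap i i' τ.1) }

/-- a face cut at coordinate i (with i ≥ s₂) is the same for dns n s₁ and dns n s₂ -/
lemma cut_face_stable {n s₁ s₂ : ℕ} (h12 : s₁ ≤ s₂) {i : Fin n} (hi : s₂ ≤ (i : ℕ))
    {σ : Set (Fin n → ℝ)} :
    (IsFace n (dns n s₁) σ ∧ CutAt i σ) ↔ (IsFace n (dns n s₂) σ ∧ CutAt i σ) := by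
  constructor
  · rintro ⟨hf, hcut⟩
    refine ⟨?_, hcut⟩
    obtain ⟨⟨x, hx, hxi⟩, ⟨y, hy, hyi⟩⟩ := hcut
    refine ⟨hf.1, fun a => SignType.sign (ip a x), ?_⟩
    ext z
    constructor
    · intro hz a ha
      show SignType.sign (ip a z) = SignType.sign (ip a x)
      rcases ha with hpair | ⟨k, hk, rfl⟩
      · exact sign_const hf (Or.inl hpair) hz hx
      · have hki : k ≠ i := fun hh => by rw [hh] at hk; omega
        rw [ip_single, ip_single]
        exact (dominance hf hx hxi hy hyi z hz k hki).2
    · intro hz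
      rw [faceEq hf hx]
      intro a ha
      exact hz a (dns_mono h12 ha)
  · rintro ⟨hf, hcut⟩
    refine ⟨?_, hcut⟩
    obtain ⟨⟨x, hx, hxi⟩, ⟨y, hy, hyi⟩⟩ := hcut
    set τ := {z | ∀ a ∈ dns n s₁, SignType.sign (ip a z) = SignType.sign (ip a x)} with hτ
    have hτf : IsFace n (dns n s₁) τ := face_of_point _ x
    have hsub : σ ⊆ τ := by
      intro z hz a ha
      exact sign_const hf (dns_mono h12 ha) hz hx
    have hxτ : x ∈ τ := hsub hx
    have hyτ : y ∈ τ := hsub hy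
    have hsub2 : τ ⊆ σ := by
      intro z hz
      rw [faceEq hf hx]
      intro a ha
      rcases ha with hpair | ⟨k, hk, rfl⟩
      · exact hz _ (Or.inl hpair)
      · have hki : k ≠ i := fun hh => by rw [hh] at hk; omega
        rw [ip_single, ip_single]
        exact (dominance hτf hxτ hxi hyτ hyi z hz k hki).2
    have : σ = τ := Set.Subset.antisymm hsub hsub2
    rw [this]
    exact hτf

lemma cnum_stable {n s₁ s₂ : ℕ} (h12 : s₁ ≤ s₂) {i : Fin n} (hi : s₂ ≤ (i : ℕ)) (e : ℕ) :
    cnum n s₁ i e = cnum n s₂ i e := by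
  apply Nat.card_congr
  apply Equiv.subtypeEquivRight
  intro σ
  constructor
  · rintro ⟨h1, h2, h3⟩
    exact ⟨((cut_face_stable h12 hi).mp ⟨h1, h3⟩).1, h2, h3⟩
  · rintro ⟨h1, h2, h3⟩
    exact ⟨((cut_face_stable h12 hi).mpr ⟨h1, h3⟩).1, h2, h3⟩

/-- the face-count increment is independent of s -/
lemma fnum_increment {n : ℕ} (hn : 2 ≤ n) {s₁ s₂ : ℕ} (h1 : s₁ < n) (h2 : s₂ < n)
    (h12 : s₁ ≤ s₂) (d : ℕ) :
    fnum n (dns n (s₁+1)) d + fnum n (dns n s₂) d =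
      fnum n (dns n s₁) d + fnum n (dns n (s₂+1)) d := by
  set i₁ : Fin n := ⟨s₁, h1⟩ with hi₁
  set i₂ : Fin n := ⟨s₂, h2⟩ with hi₂
  have e1 : ∀ e, cnum n s₁ i₁ e = cnum n s₂ i₂ e := by
    intro e
    rw [cnum_swap (i := i₁) (i' := i₂) (by simp [hi₁]) (by simp [hi₂]; omega) e]
    exact cnum_stable h12 (by simp [hi₂]) e
  rw [fnum_succ hn (s := s₁) (i := i₁) rfl d, fnum_succ hn (s := s₂) (i := i₂) rfl d,
    e1 d, e1 (d+1)]
  omega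

lemma fPoly_increment {n : ℕ} (hn : 2 ≤ n) {s₁ s₂ : ℕ} (h1 : s₁ < n) (h2 : s₂ < n)
    (h12 : s₁ ≤ s₂) :
    fPoly n (dns n (s₁+1)) + fPoly n (dns n s₂) =
      fPoly n (dns n s₁) + fPoly n (dns n (s₂+1)) := by
  unfold fPoly
  rw [← Finset.sum_add_distrib, ← Finset.sum_add_distrib]
  apply Finset.sum_congr rfl
  intro i _
  rw [← add_mul, ← add_mul, ← Polynomial.C_add, ← Polynomial.C_add]
  have : ((fnum n (dns n (s₁+1)) (n-i) : ℚ) + fnum n (dns n s₂) (n-i)) =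
      ((fnum n (dns n s₁) (n-i) : ℚ) + fnum n (dns n (s₂+1)) (n-i)) := by
    exact_mod_cast congrArg (fun z : ℕ => (z : ℚ)) (fnum_increment hn h1 h2 h12 (n-i))
  rw [this]

lemma hPoly_increment {n : ℕ} (hn : 2 ≤ n) {s₁ s₂ : ℕ} (h1 : s₁ < n) (h2 : s₂ < n)
    (h12 : s₁ ≤ s₂) :
    hPoly n (dns n (s₁+1)) + hPoly n (dns n s₂) =
      hPoly n (dns n s₁) + hPoly n (dns n (s₂+1)) := by
  unfold hPoly
  rw [← Polynomial.add_comp, ← Polynomial.add_comp, fPoly_increment hn h1 h2 h12]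

lemma lin_indep_gamma (m : ℕ) (c : ℕ → ℚ) (E : ℕ → ℕ)
    (h : ∑ i ∈ Finset.range m,
      Polynomial.C (c i) * Polynomial.X ^ i * (1 + Polynomial.X) ^ (E i) = (0 : Polynomial ℚ)) :
    ∀ k, k < m → c k = 0 := by
  intro k
  induction k using Nat.strong_induction_on with
  | _ k IH =>
  intro hk
  have hco : ∑ i ∈ Finset.range m,
      (Polynomial.C (c i) * Polynomial.X ^ i * (1 + Polynomial.X) ^ (E i)).coeff k = 0 := by
    rw [← Polynomial.finset_sum_coeff, h, Polynomial.coeff_zero]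
  have hterm : ∀ i ∈ Finset.range m,
      (Polynomial.C (c i) * Polynomial.X ^ i * (1 + Polynomial.X) ^ (E i)).coeff k =
        if i = k then c k else 0 := by
    intro i hi
    have hre : Polynomial.C (c i) * Polynomial.X ^ i * (1 + Polynomial.X) ^ (E i) =
        (Polynomial.C (c i) * (1 + Polynomial.X) ^ (E i)) * Polynomial.X ^ i := by ring
    rw [hre, Polynomial.coeff_mul_X_pow']
    by_cases hik : i = k
    · subst hik
      rw [if_pos rfl, if_pos le_rfl, Nat.sub_self, Polynomial.coeff_C_mul,
        Polynomial.coeff_zero_eq_eval_zero]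
      simp
    · rw [if_neg hik]
      by_cases hle : i ≤ k
      · have hilt : i < k := lt_of_le_of_ne hle hik
        rw [if_pos hle, Polynomial.coeff_C_mul, IH i hilt (Finset.mem_range.mp hi), zero_mul]
      · rw [if_neg hle]
  rw [Finset.sum_congr rfl hterm, Finset.sum_ite_eq' (Finset.range m) k (fun _ => c k)] at hco
  rw [if_pos (Finset.mem_range.mpr hk)] at hco
  exact hco

/-- the key γ increment lemma in ordered form -/
lemma gamma_key {n : ℕ} (hn : 2 ≤ n) (γ : ℕ → ℕ → ℤ)
    (hγ : ∀ s ≤ n, hPoly n (dns n s) =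
      ∑ i ∈ Finset.range (n / 2 + 1),
        Polynomial.C ((γ s i : ℚ)) * Polynomial.X ^ i * (1 + Polynomial.X) ^ (n - 2 * i))
    (k : ℕ) (hk : k ≤ n / 2) {s₁ s₂ : ℕ} (h12 : s₁ ≤ s₂) (hs₁ : s₁ < n) (hs₂ : s₂ < n) :
    γ (s₁ + 1) k - γ s₁ k = γ (s₂ + 1) k - γ s₂ k := by
  have hkey : (∑ i ∈ Finset.range (n / 2 + 1),
        Polynomial.C ((γ (s₁+1) i : ℚ)) * Polynomial.X ^ i * (1 + Polynomial.X) ^ (n - 2 * i)) +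
      (∑ i ∈ Finset.range (n / 2 + 1),
        Polynomial.C ((γ s₂ i : ℚ)) * Polynomial.X ^ i * (1 + Polynomial.X) ^ (n - 2 * i)) =
      (∑ i ∈ Finset.range (n / 2 + 1),
        Polynomial.C ((γ s₁ i : ℚ)) * Polynomial.X ^ i * (1 + Polynomial.X) ^ (n - 2 * i)) +
      (∑ i ∈ Finset.range (n / 2 + 1),
        Polynomial.C ((γ (s₂+1) i : ℚ)) * Polynomial.X ^ i * (1 + Polynomial.X) ^ (n - 2 * i)) := by
    rw [← hγ (s₁+1) (by omega), ← hγ s₂ (by omega), ← hγ s₁ (by omega), ← hγ (s₂+1) (by omega)]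
    exact hPoly_increment hn hs₁ hs₂ h12
  have hsum : ∑ i ∈ Finset.range (n / 2 + 1),
      Polynomial.C (((γ (s₁+1) i : ℚ) + γ s₂ i) - ((γ s₁ i : ℚ) + γ (s₂+1) i)) *
        Polynomial.X ^ i * (1 + Polynomial.X) ^ (n - 2 * i) = 0 := by
    have hstep : ∑ i ∈ Finset.range (n / 2 + 1),
        Polynomial.C (((γ (s₁+1) i : ℚ) + γ s₂ i) - ((γ s₁ i : ℚ) + γ (s₂+1) i)) *
          Polynomial.X ^ i * (1 + Polynomial.X) ^ (n - 2 * i) =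
        ((∑ i ∈ Finset.range (n / 2 + 1),
          Polynomial.C ((γ (s₁+1) i : ℚ)) * Polynomial.X ^ i * (1 + Polynomial.X) ^ (n - 2 * i)) +
        (∑ i ∈ Finset.range (n / 2 + 1),
          Polynomial.C ((γ s₂ i : ℚ)) * Polynomial.X ^ i * (1 + Polynomial.X) ^ (n - 2 * i))) -
        ((∑ i ∈ Finset.range (n / 2 + 1),
          Polynomial.C ((γ s₁ i : ℚ)) * Polynomial.X ^ i * (1 + Polynomial.X) ^ (n - 2 * i)) +
        (∑ i ∈ Finset.range (n / 2 + 1),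
          Polynomial.C ((γ (s₂+1) i : ℚ)) * Polynomial.X ^ i *
            (1 + Polynomial.X) ^ (n - 2 * i))) := by
      rw [← Finset.sum_add_distrib, ← Finset.sum_add_distrib, ← Finset.sum_sub_distrib]
      apply Finset.sum_congr rfl
      intro i _
      simp only [Polynomial.C_add, Polynomial.C_sub]
      ring
    rw [hstep, hkey, sub_self]
  have hzero := lin_indep_gamma _ _ _ hsum k (by omega)
  have hcast : ((γ (s₁+1) k + γ s₂ k : ℤ) : ℚ) = ((γ s₁ k + γ (s₂+1) k : ℤ) : ℚ) := by
    push_cast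
    linarith [hzero]
  have hint : γ (s₁+1) k + γ s₂ k = γ s₁ k + γ (s₂+1) k := by exact_mod_cast hcast
  omega

end Gam

/-- For every `n ≥ 2` and `0 ≤ k ≤ ⌊n/2⌋`, the increment `γ_k(D_{n,s+1}) − γ_k(D_{n,s})` is
independent of `s`; here `γ s` is the γ-vector of `D_{n,s}`, i.e. the (unique) integer vector
with `h_{D_{n,s}}(t) = Σ_{i=0}^{⌊n/2⌋} γ_i tⁱ (1+t)^{n−2i}`. -/
theorem gamma_increment_independent_of_s (n : ℕ) (hn : 2 ≤ n) (γ : ℕ → ℕ → ℤ)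
    (hγ : ∀ s ≤ n, hPoly n (dns n s) =
      ∑ i ∈ Finset.range (n / 2 + 1),
        Polynomial.C ((γ s i : ℚ)) * Polynomial.X ^ i * (1 + Polynomial.X) ^ (n - 2 * i))
    (k : ℕ) (hk : k ≤ n / 2) :
    ∀ s₁ s₂ : ℕ, s₁ < n → s₂ < n →
      γ (s₁ + 1) k - γ s₁ k = γ (s₂ + 1) k - γ s₂ k := by
  intro s₁ s₂ h1 h2
  rcases le_total s₁ s₂ with h | h
  · exact Gam.gamma_key hn γ hγ k hk h h1 h2
  · exact (Gam.gamma_key hn γ hγ k hk h h2 h1).symm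

end
end

section
/- Let n ≥ 2, let S, S' ⊆ {1,...,n} be subsets which both do not contain the index i ∈ {1,...,n}, and let σ be a face of the arrangement D_{n,S} which is contained in the coordinate hyperplane H_i = {x ∈ ℝ^n : x_i = 0}. Then σ is also a face of D_{n,S'}. -/
noncomputable section

/-- The set of normal vectors of the arrangement `D_{n,S}`: the normals `e_i − e_j`,
`e_i + e_j` of the hyperplanes `{x_i = x_j}`, `{x_i = −x_j}` for `i < j`, together with the
normals `e_k` of the coordinate hyperplanes `H_k` for `k ∈ S`. -/
def dnsArr (n : ℕ) (S : Set (Fin n)) : Set (Fin n → ℝ) :=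
  {v | ∃ i j : Fin n, i < j ∧
    (v = Pi.single i (1 : ℝ) - Pi.single j 1 ∨ v = Pi.single i (1 : ℝ) + Pi.single j 1)} ∪
  {v | ∃ k ∈ S, v = Pi.single k (1 : ℝ)}

lemma sum_single_mul {n : ℕ} (p : Fin n) (x : Fin n → ℝ) :
    ∑ t, (Pi.single p 1 : Fin n → ℝ) t * x t = x p := by
  simp [Pi.single_apply]

lemma sum_sub_mul {n : ℕ} (p q : Fin n) (x : Fin n → ℝ) :
    ∑ t, (Pi.single p 1 - Pi.single q 1 : Fin n → ℝ) t * x t = x p - x q := by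
  simp [Pi.sub_apply, sub_mul, Finset.sum_sub_distrib, Pi.single_apply]

lemma sum_add_mul {n : ℕ} (p q : Fin n) (x : Fin n → ℝ) :
    ∑ t, (Pi.single p 1 + Pi.single q 1 : Fin n → ℝ) t * x t = x p + x q := by
  simp [Pi.add_apply, add_mul, Finset.sum_add_distrib, Pi.single_apply]

lemma sign_add_right {δ y : ℝ} (h : |δ| < |y|) :
    SignType.sign (δ + y) = SignType.sign y := by
  obtain ⟨h1, h2⟩ := abs_lt.mp h
  rcases lt_trichotomy y 0 with hy | hy | hy
  · rw [abs_of_neg hy] at h1 h2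
    rw [sign_neg hy, sign_neg (by linarith : δ + y < 0)]
  · rw [hy, abs_zero] at h; exact absurd h (abs_nonneg δ).not_gt
  · rw [abs_of_pos hy] at h1 h2
    rw [sign_pos hy, sign_pos (by linarith : 0 < δ + y)]

lemma single_inj {n : ℕ} (k k' : Fin n)
    (h : (Pi.single k 1 : Fin n → ℝ) = Pi.single k' 1) : k = k' := by
  by_contra hne
  have := congrFun h k
  rw [Pi.single_eq_same, Pi.single_eq_of_ne hne] at this
  exact one_ne_zero this

lemma not_single {n : ℕ} (p q : Fin n) (hpq : p < q) (v : Fin n → ℝ)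
    (hf : v = Pi.single p (1 : ℝ) - Pi.single q 1 ∨ v = Pi.single p (1 : ℝ) + Pi.single q 1) :
    ¬∃ k : Fin n, v = (Pi.single k 1 : Fin n → ℝ) := by
  rintro ⟨k, rfl⟩
  rcases hf with h | h
  · have hq := congrFun h q
    rw [Pi.sub_apply, Pi.single_eq_same, Pi.single_eq_of_ne hpq.ne', Pi.single_apply] at hq
    split_ifs at hq <;> norm_num at hq
  · have hp := congrFun h p
    have hq := congrFun h q
    rw [Pi.add_apply, Pi.single_eq_same, Pi.single_eq_of_ne hpq.ne, Pi.single_apply,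
      add_zero] at hp
    rw [Pi.add_apply, Pi.single_eq_same, Pi.single_eq_of_ne hpq.ne', Pi.single_apply,
      zero_add] at hq
    have hpk : p = k := by by_contra hc; rw [if_neg hc] at hp; norm_num at hp
    have hqk : q = k := by by_contra hc; rw [if_neg hc] at hq; norm_num at hq
    exact hpq.ne (hpk.trans hqk.symm)

lemma mem_sub_dnsArr {n : ℕ} (S₀ : Set (Fin n)) {p q : Fin n} (h : p < q) :
    (Pi.single p 1 - Pi.single q 1 : Fin n → ℝ) ∈ dnsArr n S₀ :=
  Or.inl ⟨p, q, h, Or.inl rfl⟩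

lemma mem_add_dnsArr {n : ℕ} (S₀ : Set (Fin n)) {p q : Fin n} (h : p < q) :
    (Pi.single p 1 + Pi.single q 1 : Fin n → ℝ) ∈ dnsArr n S₀ :=
  Or.inl ⟨p, q, h, Or.inr rfl⟩

lemma mem_single_dnsArr {n : ℕ} {S₀ : Set (Fin n)} {k : Fin n} (h : k ∈ S₀) :
    (Pi.single k 1 : Fin n → ℝ) ∈ dnsArr n S₀ :=
  Or.inr ⟨k, h, rfl⟩

/-- If `S, S'` both avoid the index `i` and `σ` is a face of `D_{n,S}` contained in the
coordinate hyperplane `H_i = {x_i = 0}`, then `σ` is also a face of `D_{n,S'}`. -/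
theorem face_transfer_of_not_mem (n : ℕ) (hn : 2 ≤ n) (S S' : Set (Fin n)) (i : Fin n)
    (hiS : i ∉ S) (hiS' : i ∉ S') (σ : Set (Fin n → ℝ))
    (hface : IsFace n (dnsArr n S) σ) (hsub : σ ⊆ {x | x i = 0}) :
    IsFace n (dnsArr n S') σ := by
  obtain ⟨⟨x₀, hx₀⟩, ε, hσ⟩ := hface
  have hx₀i : x₀ i = 0 := hsub hx₀
  have hx₀σ : ∀ a ∈ dnsArr n S, SignType.sign (∑ t, a t * x₀ t) = ε a := by
    rw [hσ] at hx₀; exact hx₀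
  -- Step 1: there is an index `j ≠ i` with `x₀ j = 0`.
  have hex : ∃ j : Fin n, j ≠ i ∧ x₀ j = 0 := by
    by_contra hcon
    push_neg at hcon
    haveI : Nontrivial (Fin n) := Fin.nontrivial_iff_two_le.mpr hn
    obtain ⟨j₀, hj₀⟩ := exists_ne i
    have hTne : (Finset.univ.erase i).Nonempty :=
      ⟨j₀, Finset.mem_erase.mpr ⟨hj₀, Finset.mem_univ _⟩⟩
    set m := (Finset.univ.erase i).inf' hTne (fun j => |x₀ j|) with hm
    have hmpos : 0 < m := by
      rw [hm, Finset.lt_inf'_iff]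
      exact fun j hj => abs_pos.mpr (hcon j (Finset.mem_erase.mp hj).1)
    have hmle : ∀ j : Fin n, j ≠ i → m ≤ |x₀ j| := fun j hj =>
      Finset.inf'_le _ (Finset.mem_erase.mpr ⟨hj, Finset.mem_univ _⟩)
    set y := Function.update x₀ i (m / 2) with hy
    have hyi : y i = m / 2 := Function.update_self i _ x₀
    have hyk : ∀ k : Fin n, k ≠ i → y k = x₀ k := fun k hk => Function.update_of_ne hk _ x₀
    have key : ∀ s : ℝ, |s| = 1 → ∀ p q : Fin n, p ≠ q →
        SignType.sign (y p + s * y q) = SignType.sign (x₀ p + s * x₀ q) := by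
      intro s hs p q hpq
      rcases eq_or_ne i p with hpi | hpi
      · subst hpi
        have hqi : q ≠ i := fun h => hpq h.symm
        rw [hyi, hyk q hqi, hx₀i, zero_add]
        refine sign_add_right ?_
        rw [abs_mul, hs, one_mul, abs_of_pos (by linarith : (0:ℝ) < m / 2)]
        exact lt_of_lt_of_le (by linarith) (hmle q hqi)
      · replace hpi : p ≠ i := Ne.symm hpi
        rcases eq_or_ne i q with hqi | hqi
        · subst hqi
          rw [hyi, hyk p hpi, hx₀i, mul_zero, add_zero, add_comm]
          refine sign_add_right ?_
          rw [abs_mul, hs, one_mul, abs_of_pos (by linarith : (0:ℝ) < m / 2)]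
          exact lt_of_lt_of_le (by linarith) (hmle p hpi)
        · rw [hyk p hpi, hyk q (Ne.symm hqi)]
    have hyσ : y ∈ σ := by
      rw [hσ]
      intro a ha
      rcases ha with ⟨p, q, hpq, hf⟩ | ⟨k, hk, rfl⟩
      · rcases hf with rfl | rfl
        · rw [sum_sub_mul]
          have h2 := hx₀σ _ (mem_sub_dnsArr S hpq)
          rw [sum_sub_mul] at h2
          rw [← h2]
          have := key (-1) (by norm_num) p q hpq.ne
          rwa [neg_one_mul, neg_one_mul, ← sub_eq_add_neg, ← sub_eq_add_neg] at this
        · rw [sum_add_mul]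
          have h2 := hx₀σ _ (mem_add_dnsArr S hpq)
          rw [sum_add_mul] at h2
          rw [← h2]
          have := key 1 (by norm_num) p q hpq.ne
          rwa [one_mul, one_mul] at this
      · have hki : k ≠ i := fun h => hiS (h ▸ hk)
        rw [sum_single_mul, hyk k hki]
        have h2 := hx₀σ _ (mem_single_dnsArr hk)
        rwa [sum_single_mul] at h2
    have : y i = 0 := hsub hyσ
    rw [hyi] at this
    linarith
  obtain ⟨j, hji, hj0⟩ := hex
  -- The new sign vector.
  set ε' : (Fin n → ℝ) → SignType := fun a =>
    if h : ∃ k : Fin n, a = (Pi.single k 1 : Fin n → ℝ) then SignType.sign (x₀ h.choose)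
    else ε a with hε'
  have hε'neg : ∀ a : Fin n → ℝ, (¬∃ k : Fin n, a = (Pi.single k 1 : Fin n → ℝ)) →
      ε' a = ε a := fun a h => dif_neg h
  have hε'pos : ∀ k : Fin n, ε' (Pi.single k 1 : Fin n → ℝ) = SignType.sign (x₀ k) := by
    intro k
    have h : ∃ k' : Fin n, (Pi.single k 1 : Fin n → ℝ) = Pi.single k' 1 := ⟨k, rfl⟩
    have h1 : ε' (Pi.single k 1 : Fin n → ℝ) = SignType.sign (x₀ h.choose) := dif_pos h
    rw [h1, ← single_inj k h.choose h.choose_spec]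
  -- transfer of coordinate signs
  have transfer : ∀ x : Fin n → ℝ, x i = 0 →
      (∀ p q : Fin n, p < q → SignType.sign (x p - x q) = SignType.sign (x₀ p - x₀ q)) →
      ∀ k : Fin n, SignType.sign (x k) = SignType.sign (x₀ k) := by
    intro x hxi hx k
    rcases eq_or_ne k i with rfl | hki
    · rw [hxi, hx₀i]
    · rcases lt_or_gt_of_ne hki with h | h
      · have := hx k i h
        rwa [hxi, hx₀i, sub_zero, sub_zero] at this
      · have := hx i k h
        rw [hxi, hx₀i, zero_sub, zero_sub, Left.sign_neg, Left.sign_neg] at this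
        exact neg_injective this
  refine ⟨⟨x₀, hx₀⟩, ε', ?_⟩
  ext x
  simp only [Set.mem_setOf_eq]
  constructor
  · intro hx
    have hxi : x i = 0 := hsub hx
    have hxσ : ∀ a ∈ dnsArr n S, SignType.sign (∑ t, a t * x t) = ε a := by
      rw [hσ] at hx; exact hx
    have hdiff : ∀ p q : Fin n, p < q →
        SignType.sign (x p - x q) = SignType.sign (x₀ p - x₀ q) := by
      intro p q h
      have h1 := hxσ _ (mem_sub_dnsArr S h)
      have h2 := hx₀σ _ (mem_sub_dnsArr S h)
      rw [sum_sub_mul] at h1 h2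
      rw [h1, h2]
    intro a ha
    rcases ha with ⟨p, q, hpq, hf⟩ | ⟨k, hk, rfl⟩
    · rw [hε'neg a (not_single p q hpq a hf)]
      exact hxσ a (Or.inl ⟨p, q, hpq, hf⟩)
    · rw [sum_single_mul, hε'pos k]
      exact transfer x hxi hdiff k
  · intro hx
    have hdiff : ∀ p q : Fin n, p < q →
        SignType.sign (x p - x q) = SignType.sign (x₀ p - x₀ q) := by
      intro p q h
      have h1 := hx _ (mem_sub_dnsArr S' h)
      rw [sum_sub_mul, hε'neg _ (not_single p q h _ (Or.inl rfl))] at h1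
      have h2 := hx₀σ _ (mem_sub_dnsArr S h)
      rw [sum_sub_mul] at h2
      rw [h1, h2]
    have hsum : ∀ p q : Fin n, p < q →
        SignType.sign (x p + x q) = SignType.sign (x₀ p + x₀ q) := by
      intro p q h
      have h1 := hx _ (mem_add_dnsArr S' h)
      rw [sum_add_mul, hε'neg _ (not_single p q h _ (Or.inr rfl))] at h1
      have h2 := hx₀σ _ (mem_add_dnsArr S h)
      rw [sum_add_mul] at h2
      rw [h1, h2]
    have hxi : x i = 0 := by
      have hd : ∀ p q : Fin n, p < q → (p = i ∧ q = j ∨ p = j ∧ q = i) → x i = 0 := by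
        intro p q hpq hor
        have h1 := hdiff p q hpq
        have h2 := hsum p q hpq
        have hp0 : x₀ p = 0 := by
          rcases hor with ⟨rfl, rfl⟩ | ⟨rfl, rfl⟩
          exacts [hx₀i, hj0]
        have hq0 : x₀ q = 0 := by
          rcases hor with ⟨rfl, rfl⟩ | ⟨rfl, rfl⟩
          exacts [hj0, hx₀i]
        rw [hp0, hq0, sub_zero, sign_zero] at h1
        rw [hp0, hq0, add_zero, sign_zero] at h2
        have e1 : x p - x q = 0 := sign_eq_zero_iff.mp h1
        have e2 : x p + x q = 0 := sign_eq_zero_iff.mp h2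
        rcases hor with ⟨rfl, rfl⟩ | ⟨rfl, rfl⟩ <;> linarith
      rcases lt_or_gt_of_ne hji with h | h
      · exact hd j i h (Or.inr ⟨rfl, rfl⟩)
      · exact hd i j h (Or.inl ⟨rfl, rfl⟩)
    rw [hσ]
    intro a ha
    rcases ha with ⟨p, q, hpq, hf⟩ | ⟨k, hk, rfl⟩
    · have h1 := hx a (Or.inl ⟨p, q, hpq, hf⟩)
      rwa [hε'neg a (not_single p q hpq a hf)] at h1
    · rw [sum_single_mul]
      have h2 := hx₀σ _ (mem_single_dnsArr hk)
      rw [sum_single_mul] at h2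
      rw [← h2]
      exact transfer x hxi hdiff k

end
end

section
/- Let n ≥ 2 and let u = (u_1,...,u_n) ∈ S_n be a permutation with u_1 = n, and denote by u' = (u_2,...,u_n) the permutation of {1,...,n−1} obtained by deleting the first entry. Then p(u) = m(hf(u')), where hf(v) := (n − v_1, ..., n − v_{n−1}) is the horizontal flip of v ∈ S_{n−1}. -/
/-- The number of maxima `m(u)` of a sequence `u` of length `m`: the number of positions `i`
with `u_{i−1} < u_i > u_{i+1}`, under the convention `u_0 = u_{m+1} = 0` (so the boundary
conditions hold automatically). -/
noncomputable def numMaxima {m : ℕ} (u : Fin m → ℕ) : ℕ :=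
  Nat.card {i : Fin m // (∀ j : Fin m, (j : ℕ) + 1 = (i : ℕ) → u j < u i) ∧
    (∀ j : Fin m, (j : ℕ) = (i : ℕ) + 1 → u j < u i)}

/-- The number of peaks `p(u)` of a sequence `u` of length `m`: the number of positions `i`
with `u_{i−1} < u_i > u_{i+1}`, under the convention `u_0 = 0` and `u_{m+1} = m+1` (so the
left boundary condition holds automatically, while the last position is never a peak). -/
noncomputable def numPeaks {m : ℕ} (u : Fin m → ℕ) : ℕ :=
  Nat.card {i : Fin m // (∀ j : Fin m, (j : ℕ) + 1 = (i : ℕ) → u j < u i) ∧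
    (∃ j : Fin m, (j : ℕ) = (i : ℕ) + 1 ∧ u j < u i)}

open Finset

lemma card_subtype_fin {m : ℕ} (P : Fin m → Prop) (b : ℕ → Bool)
    (h : ∀ i : Fin m, P i ↔ b (i : ℕ) = true) :
    (Nat.card {i : Fin m // P i} : ℤ) = ∑ k ∈ Finset.range m, (if b k then (1:ℤ) else 0) := by
  classical
  have h1 : Nat.card {i : Fin m // P i} = Nat.card {i : Fin m // b (i:ℕ) = true} :=
    Nat.card_congr (Equiv.subtypeEquivRight fun i => h i)
  rw [h1, Nat.card_eq_fintype_card, Fintype.card_subtype, Finset.card_filter]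
  push_cast
  exact Fin.sum_univ_eq_sum_range (fun k => if b k then (1:ℤ) else 0) m

lemma transitions (b : ℕ → Bool) (m : ℕ) (h0 : b 0 = true) (hm : b m = false) :
    ∑ k ∈ range m, (if b k = true ∧ ¬ b (k+1) = true then (1:ℤ) else 0)
      = 1 + ∑ k ∈ range m, (if ¬ b k = true ∧ b (k+1) = true then (1:ℤ) else 0) := by
  have key : ∀ k, (if b k = true ∧ ¬ b (k+1) = true then (1:ℤ) else 0)
      - (if ¬ b k = true ∧ b (k+1) = true then (1:ℤ) else 0)
      = (if b k then (1:ℤ) else 0) - (if b (k+1) then 1 else 0) := by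
    intro k; cases hb : b k <;> cases hc : b (k+1) <;> simp [hb, hc]
  have h2 : ∑ k ∈ range m, ((if b k = true ∧ ¬ b (k+1) = true then (1:ℤ) else 0)
      - (if ¬ b k = true ∧ b (k+1) = true then (1:ℤ) else 0)) = 1 := by
    rw [Finset.sum_congr rfl (fun k _ => key k), Finset.sum_range_sub'
      (fun k => if b k then (1:ℤ) else 0) m]
    simp [h0, hm]
  rw [Finset.sum_sub_distrib] at h2
  linarith

set_option maxHeartbeats 1600000 in
/-- If `u ∈ S_n` has `u_1 = n` and `u' = (u_2,…,u_n)` (a permutation of `{1,…,n−1}`), then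
`p(u) = m(hf(u'))`, where `hf(v)_i = n − v_i` is the horizontal flip.  Here the permutation
`u` is encoded with 1-based values `(u i) + 1 ∈ {1,…,n}`, so the entries of `hf(u')` at
position `i` are `n − ((u (i+1)) + 1) = n − 1 − (u (i+1))`. -/
theorem peaks_eq_maxima_of_flip (n : ℕ) (hn : 2 ≤ n) (u : Equiv.Perm (Fin n))
    (hu : (u ⟨0, by omega⟩ : ℕ) = n - 1) :
    numPeaks (fun i : Fin n => (u i : ℕ) + 1) =
      numMaxima (fun i : Fin (n - 1) =>
        n - 1 - (u ⟨(i : ℕ) + 1, by have := i.isLt; omega⟩ : ℕ)) := by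
  classical
  set m := n - 1 with hmdef
  have hm1 : 1 ≤ m := by omega
  -- the underlying word on ℕ
  set w : ℕ → ℕ := fun k => if h : k < n then (u ⟨k, h⟩ : ℕ) else 0 with hwdef
  have hwval : ∀ (k : ℕ) (hk : k < n), w k = (u ⟨k, hk⟩ : ℕ) := by
    intro k hk; simp [hwdef, hk]
  have hwlt : ∀ (k : ℕ), k < n → w k < n := by
    intro k hk; rw [hwval k hk]; exact (u ⟨k, hk⟩).isLt
  have hwinj : ∀ k l, k < n → l < n → w k = w l → k = l := by
    intro k l hk hl h
    rw [hwval k hk, hwval l hl] at h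
    have h2 : u ⟨k, hk⟩ = u ⟨l, hl⟩ := Fin.val_injective h
    have h3 := u.injective h2
    exact congrArg Fin.val h3
  have hw0 : w 0 = n - 1 := by rw [hwval 0 (by omega)]; exact hu
  -- the descent indicator
  set B : ℕ → Bool := fun k => decide (k + 1 < n ∧ w (k+1) < w k) with hBdef
  have hB : ∀ k, B k = true ↔ (k + 1 < n ∧ w (k+1) < w k) := by
    intro k; simp [hBdef]
  have hB0 : B 0 = true := by
    rw [hB]
    refine ⟨by omega, ?_⟩
    show w 1 < w 0
    have h1 : w 1 < n := hwlt 1 (by omega)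
    have h2 : w 1 ≠ w 0 := fun h => by have := hwinj 1 0 (by omega) (by omega) h; omega
    omega
  have hBm : B m = false := by
    simp only [hBdef, decide_eq_false_iff_not]
    rintro ⟨h1, -⟩; omega
  -- peaks indicator
  set bp : ℕ → Bool := fun k => ((k == 0) || !(B (k-1))) && B k with hbpdef
  set bm : ℕ → Bool := fun k => B k && !(B (k+1)) with hbmdef
  -- LHS as a sum
  have hpeak : (numPeaks (fun i : Fin n => (u i : ℕ) + 1) : ℤ)
      = ∑ k ∈ range n, (if bp k then (1:ℤ) else 0) := by
    apply card_subtype_fin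
    intro i
    have hiv : ((u i : ℕ)) = w (i : ℕ) := by
      rw [hwval (i : ℕ) i.isLt]
    constructor
    · rintro ⟨h1, j, hj1, hj2⟩
      dsimp only at hj2
      have hBi : B (i : ℕ) = true := by
        rw [hB]
        have hjn := j.isLt
        constructor
        · omega
        · have : w ((i:ℕ)+1) = (u j : ℕ) := by
            rw [hwval ((i:ℕ)+1) (by omega)]
            exact congrArg (fun x => ((u x : Fin n) : ℕ)) (Fin.ext hj1).symm
          omega
      simp only [hbpdef, Bool.and_eq_true, Bool.or_eq_true, beq_iff_eq,
        Bool.not_eq_true']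
      refine ⟨?_, hBi⟩
      by_cases hi0 : (i : ℕ) = 0
      · left; exact hi0
      · right
        have hlt : (i:ℕ) - 1 < n := by have := i.isLt; omega
        have h3 := h1 ⟨(i:ℕ)-1, hlt⟩ (by show (i:ℕ)-1+1 = (i:ℕ); omega)
        dsimp only at h3
        rw [Bool.eq_false_iff, Ne, hB]
        rintro ⟨-, h4⟩
        have : (i:ℕ) - 1 + 1 = (i:ℕ) := by omega
        rw [this] at h4
        rw [hwval ((i:ℕ)-1) hlt] at h4
        omega
    · intro hbp
      simp only [hbpdef, Bool.and_eq_true, Bool.or_eq_true, beq_iff_eq,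
        Bool.not_eq_true'] at hbp
      obtain ⟨hA, hBi⟩ := hbp
      rw [hB] at hBi
      constructor
      · intro j hj
        have hi0 : (i:ℕ) ≠ 0 := by omega
        rcases hA with h | h
        · omega
        · rw [Bool.eq_false_iff, Ne, hB] at h
          push_neg at h
          have hjv : (j : ℕ) = (i:ℕ) - 1 := by omega
          have h5 := h (by omega)
          rw [show (i:ℕ) - 1 + 1 = (i:ℕ) by omega] at h5
          have h7 : w ((i:ℕ)-1) ≠ w (i:ℕ) := fun hh => by
            have := hwinj _ _ (by omega) i.isLt hh; omega
          have h8 : (u j : ℕ) = w ((i:ℕ)-1) := by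
            rw [hwval ((i:ℕ)-1) (by omega)]
            exact congrArg (fun x => ((u x : Fin n) : ℕ)) (Fin.ext hjv)
          dsimp only
          omega
      · refine ⟨⟨(i:ℕ)+1, hBi.1⟩, rfl, ?_⟩
        dsimp only
        have : (u (⟨(i:ℕ)+1, hBi.1⟩ : Fin n) : ℕ) = w ((i:ℕ)+1) := (hwval _ hBi.1).symm
        omega
  -- RHS as a sum
  have hmax : (numMaxima (fun i : Fin (n - 1) =>
        n - 1 - (u ⟨(i : ℕ) + 1, by have := i.isLt; omega⟩ : ℕ)) : ℤ)
      = ∑ k ∈ range m, (if bm k then (1:ℤ) else 0) := by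
    apply card_subtype_fin
    intro i
    have him := i.isLt
    have hv : ∀ (k : ℕ) (hk : k < m) (hk2 : k + 1 < n),
        (fun i : Fin (n - 1) =>
          n - 1 - (u ⟨(i : ℕ) + 1, by have := i.isLt; omega⟩ : ℕ)) ⟨k, hk⟩
          = n - 1 - w (k+1) := by
      intro k hk hk2
      simp only
      rw [hwval (k+1) hk2]
    constructor
    · rintro ⟨h1, h2⟩
      simp only [hbmdef, Bool.and_eq_true, Bool.not_eq_true']
      constructor
      · -- B i = true
        by_cases hi0 : (i:ℕ) = 0
        · rw [show (i:ℕ) = 0 from hi0]; exact hB0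
        · rw [hB]
          refine ⟨by omega, ?_⟩
          have hlt : (i:ℕ) - 1 < m := by omega
          have h3 := h1 ⟨(i:ℕ)-1, hlt⟩ (by show (i:ℕ)-1+1 = (i:ℕ); omega)
          rw [hv ((i:ℕ)-1) hlt (by omega), show ((i:ℕ)-1+1) = (i:ℕ) by omega] at h3
          have h4 := hv (i:ℕ) him (by omega)
          rw [show ((⟨(i:ℕ), him⟩ : Fin (n-1))) = i from Fin.eta i him] at h4
          rw [h4] at h3
          have hb1 : w (i:ℕ) < n := hwlt _ (by omega)
          have hb2 : w ((i:ℕ)+1) < n := hwlt _ (by omega)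
          omega
      · -- B (i+1) = false
        rw [Bool.eq_false_iff, Ne, hB]
        rintro ⟨hlt, h4⟩
        rw [show (i:ℕ)+1+1 = (i:ℕ)+2 by omega] at h4
        have hltm : (i:ℕ) + 1 < m := by omega
        have h3 := h2 ⟨(i:ℕ)+1, hltm⟩ rfl
        rw [hv ((i:ℕ)+1) hltm (by omega),
          show (i:ℕ)+1+1 = (i:ℕ)+2 by omega] at h3
        have h5 := hv (i:ℕ) him (by omega)
        rw [show ((⟨(i:ℕ), him⟩ : Fin (n-1))) = i from Fin.eta i him] at h5
        rw [h5] at h3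
        have hb1 : w ((i:ℕ)+1) < n := hwlt _ (by omega)
        have hb2 : w ((i:ℕ)+2) < n := hwlt _ (by omega)
        omega
    · intro hbm
      simp only [hbmdef, Bool.and_eq_true, Bool.not_eq_true'] at hbm
      obtain ⟨hBi, hBi1⟩ := hbm
      rw [hB] at hBi
      rw [Bool.eq_false_iff, Ne, hB] at hBi1
      push_neg at hBi1
      have h5 := hv (i:ℕ) him (by omega)
      rw [show ((⟨(i:ℕ), him⟩ : Fin (n-1))) = i from Fin.eta i him] at h5
      constructor
      · intro j hj
        have hjm := j.isLt
        have hjv : (j:ℕ) = (i:ℕ) - 1 := by omega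
        have h3 := hv (j:ℕ) hjm (by omega)
        rw [show ((⟨(j:ℕ), hjm⟩ : Fin (n-1))) = j from Fin.eta j hjm] at h3
        rw [h3, h5, hjv, show ((i:ℕ)-1+1) = (i:ℕ) by omega]
        have hb1 : w (i:ℕ) < n := hwlt _ (by omega)
        have hb2 : w ((i:ℕ)+1) < n := hwlt _ (by omega)
        omega
      · intro j hj
        have hjm := j.isLt
        have h3 := hv (j:ℕ) hjm (by omega)
        rw [show ((⟨(j:ℕ), hjm⟩ : Fin (n-1))) = j from Fin.eta j hjm] at h3
        rw [hj, show (i:ℕ)+1+1 = (i:ℕ)+2 by omega] at h3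
        rw [h3, h5]
        have h6 : ¬ w ((i:ℕ)+2) < w ((i:ℕ)+1) := by
          have hx := hBi1 (by omega)
          rw [show (i:ℕ)+1+1 = (i:ℕ)+2 by omega] at hx
          omega
        have hb1 : w ((i:ℕ)+1) < n := hwlt _ (by omega)
        have hb2 : w ((i:ℕ)+2) < n := hwlt _ (by omega)
        have hne : w ((i:ℕ)+1) ≠ w ((i:ℕ)+2) := fun hh => by
          have := hwinj _ _ (by omega) (by omega) hh; omega
        omega
  -- now the counting identity
  suffices h : (numPeaks (fun i : Fin n => (u i : ℕ) + 1) : ℤ)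
      = (numMaxima (fun i : Fin (n - 1) =>
        n - 1 - (u ⟨(i : ℕ) + 1, by have := i.isLt; omega⟩ : ℕ)) : ℤ) by
    exact_mod_cast h
  rw [hpeak, hmax]
  have hn' : n = m + 1 := by omega
  have hm' : m = (m - 1) + 1 := by omega
  have hbpm : bp m = false := by
    simp [hbpdef, hBm]
  have hbp0 : (if bp 0 then (1:ℤ) else 0) = 1 := by simp [hbpdef, hB0]
  have hbp1 : ∀ j : ℕ, (if bp (j+1) then (1:ℤ) else 0)
      = (if ¬ B j = true ∧ B (j+1) = true then (1:ℤ) else 0) := by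
    intro j
    have : bp (j+1) = (!(B j) && B (j+1)) := by simp [hbpdef]
    rw [this]
    cases hb : B j <;> cases hc : B (j+1) <;> simp [hb, hc]
  have hbm' : ∀ k : ℕ, (if bm k then (1:ℤ) else 0)
      = (if B k = true ∧ ¬ B (k+1) = true then (1:ℤ) else 0) := by
    intro k; simp only [hbmdef]
    cases hb : B k <;> cases hc : B (k+1) <;> simp [hb, hc]
  have e1 : ∑ k ∈ range n, (if bp k then (1:ℤ) else 0)
      = ∑ k ∈ range m, (if bp k then (1:ℤ) else 0) := by
    rw [hn', Finset.sum_range_succ, hbpm]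
    simp
  have e2 : ∑ k ∈ range m, (if bp k then (1:ℤ) else 0)
      = (∑ j ∈ range (m-1), (if ¬ B j = true ∧ B (j+1) = true then (1:ℤ) else 0)) + 1 := by
    conv_lhs => rw [hm']
    rw [Finset.sum_range_succ' (fun k => if bp k then (1:ℤ) else 0) (m-1), hbp0]
    congr 1
    exact Finset.sum_congr rfl (fun j _ => hbp1 j)
  have e3 : ∑ k ∈ range m, (if ¬ B k = true ∧ B (k+1) = true then (1:ℤ) else 0)
      = ∑ j ∈ range (m-1), (if ¬ B j = true ∧ B (j+1) = true then (1:ℤ) else 0) := by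
    conv_lhs => rw [hm']
    rw [Finset.sum_range_succ, ← hm']
    simp [hBm]
  have e4 : ∑ k ∈ range m, (if bm k then (1:ℤ) else 0)
      = ∑ k ∈ range m, (if B k = true ∧ ¬ B (k+1) = true then (1:ℤ) else 0) :=
    Finset.sum_congr rfl (fun k _ => hbm' k)
  rw [e1, e2, e4, transitions B m hB0 hBm, e3]
  ring
end

section
/- Let x ≼ y in Π_n^B. Then for any saturated chain x = x_0 ⋖ x_1 ⋖ ... ⋖ x_k = y, the set of labels {λ(x_i, x_{i+1}) : i = 0,...,k−1} is the same; i.e., this set of labels is independent of the chosen saturated chain from x to y. -/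
/-- An element of the signed partition lattice `Π_n^B`: a partition of `{−n,…,n}` into
nonempty blocks such that the set of blocks is closed under negation and any block
containing both `i` and `−i` for some `i > 0` contains `0`. -/
structure SignedPartition (n : ℕ) where
  blocks : Finset (Finset ℤ)
  nonempty_blocks : ∀ B ∈ blocks, B.Nonempty
  subset_ground : ∀ B ∈ blocks, B ⊆ Finset.Icc (-(n : ℤ)) (n : ℤ)
  disjoint_blocks : ∀ B ∈ blocks, ∀ C ∈ blocks, B ≠ C → Disjoint B C
  covers : ∀ x ∈ Finset.Icc (-(n : ℤ)) (n : ℤ), ∃ B ∈ blocks, x ∈ B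
  neg_mem : ∀ B ∈ blocks, B.image (fun k => -k) ∈ blocks
  zero_cond : ∀ B ∈ blocks, ∀ i : ℤ, 0 < i → i ∈ B → -i ∈ B → (0 : ℤ) ∈ B

namespace SignedPartition

variable {n : ℕ}

/-- The refinement order on `Π_n^B`: `x ≼ y` iff every block of `x` is contained in a block
of `y`. -/
def le (x y : SignedPartition n) : Prop := ∀ B ∈ x.blocks, ∃ C ∈ y.blocks, B ⊆ C

/-- The strict refinement order on `Π_n^B`. -/
def lt (x y : SignedPartition n) : Prop := le x y ∧ ¬ le y x

/-- The cover relation `x ⋖ y` in `Π_n^B`: `x ≺ y` and there is no `z` strictly between. -/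
def covby (x y : SignedPartition n) : Prop := lt x y ∧ ∀ z, lt x z → ¬ lt z y

end SignedPartition
/-- `m` is the minimum of `|B| = {|b| : b ∈ B}`, the set of absolute values of the block `B`. -/
def absMin (B : Finset ℤ) (m : ℕ) : Prop :=
  (∃ b ∈ B, b.natAbs = m) ∧ ∀ b ∈ B, m ≤ b.natAbs

/-- The max-of-min edge labeling on `Π_n^B`: for a cover relation `x ⋖ y`, the label is
`max{min|B₁|, min|B₂|}`, where `B₁ ≠ B₂` are two distinct non-zero blocks of `x` contained
in a common block of `y`. -/
def MaxMinLabel {n : ℕ} (x y : SignedPartition n) (l : ℕ) : Prop :=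
  ∃ B₁ ∈ x.blocks, ∃ B₂ ∈ x.blocks, B₁ ≠ B₂ ∧ (0 : ℤ) ∉ B₁ ∧ (0 : ℤ) ∉ B₂ ∧
    (∃ C ∈ y.blocks, B₁ ⊆ C ∧ B₂ ⊆ C) ∧
    ∃ m₁ m₂ : ℕ, absMin B₁ m₁ ∧ absMin B₂ m₂ ∧ l = max m₁ m₂

/-- A saturated chain in `Π_n^B` from `x` to `y`: a list of lattice elements, starting at
`x`, ending at `y`, in which each element is covered by the next one. -/
def IsSatChain {n : ℕ} (x y : SignedPartition n) (c : List (SignedPartition n)) : Prop :=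
  c.Chain' SignedPartition.covby ∧ c.head? = some x ∧ c.getLast? = some y

/-- `LabelSeq c ℓ`: the list `ℓ` is the sequence of max-of-min labels of the consecutive
cover relations along the chain `c`. -/
def LabelSeq {n : ℕ} : List (SignedPartition n) → List ℕ → Prop
  | [], [] => True
  | [_], [] => True
  | a :: b :: rest, l :: ls => MaxMinLabel a b l ∧ LabelSeq (b :: rest) ls
  | _, _ => False

namespace SP

open Finset

def nB (B : Finset ℤ) : Finset ℤ := B.image (fun k => -k)

lemma mem_nB {B : Finset ℤ} {a : ℤ} : a ∈ nB B ↔ -a ∈ B := by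
  constructor
  · intro h
    obtain ⟨b, hb, rfl⟩ := Finset.mem_image.mp h
    simpa using hb
  · intro h
    exact Finset.mem_image.mpr ⟨-a, h, by simp⟩

lemma nB_nB (B : Finset ℤ) : nB (nB B) = B := by
  ext a; simp [mem_nB]

lemma nB_union (B C : Finset ℤ) : nB (B ∪ C) = nB B ∪ nB C := by
  ext a; simp [mem_nB]

lemma zero_mem_nB {B : Finset ℤ} : (0:ℤ) ∈ nB B ↔ (0:ℤ) ∈ B := by
  simp [mem_nB]

variable {n : ℕ} {p q r : SignedPartition n} {B C B1 B2 Z : Finset ℤ}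

lemma nB_mem (hB : B ∈ p.blocks) : nB B ∈ p.blocks := p.neg_mem B hB

lemma blocks_eq (hB : B ∈ p.blocks) (hC : C ∈ p.blocks) {a : ℤ}
    (ha : a ∈ B) (ha' : a ∈ C) : B = C := by
  by_contra h
  exact Finset.disjoint_left.mp (p.disjoint_blocks B hB C hC h) ha ha'

lemma eq_of_subset_blocks (hB : B ∈ p.blocks) (hC : C ∈ p.blocks) (h : B ⊆ C) : B = C := by
  obtain ⟨a, ha⟩ := p.nonempty_blocks B hB
  exact blocks_eq hB hC ha (h ha)

lemma no_pair (hB : B ∈ p.blocks) (h0 : (0:ℤ) ∉ B) {a : ℤ} (ha : a ∈ B)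
    (ha' : -a ∈ B) : False := by
  have hane : a ≠ 0 := by rintro rfl; exact h0 ha
  rcases lt_or_gt_of_ne hane with h | h
  · exact h0 (p.zero_cond B hB (-a) (by linarith) ha' (by simpa using ha))
  · exact h0 (p.zero_cond B hB a h ha ha')

lemma ne_nB_self (hB : B ∈ p.blocks) (h0 : (0:ℤ) ∉ B) : B ≠ nB B := by
  intro h
  obtain ⟨a, ha⟩ := p.nonempty_blocks B hB
  exact no_pair hB h0 ha (mem_nB.mp (h ▸ ha))

lemma nB_inj (h : nB B = nB C) : B = C := by
  have := congrArg nB h; rwa [nB_nB, nB_nB] at this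

lemma le_refl (p : SignedPartition n) : SignedPartition.le p p :=
  fun B hB => ⟨B, hB, subset_rfl⟩

lemma le_trans (h : SignedPartition.le p q) (h' : SignedPartition.le q r) :
    SignedPartition.le p r := by
  intro B hB
  obtain ⟨C, hC, hBC⟩ := h B hB
  obtain ⟨D, hD, hCD⟩ := h' C hC
  exact ⟨D, hD, hBC.trans hCD⟩

lemma subset_block_unique (hC : C ∈ q.blocks) {C' : Finset ℤ} (hC' : C' ∈ q.blocks)
    (hB : B.Nonempty) (h : B ⊆ C) (h' : B ⊆ C') : C = C' := by
  obtain ⟨a, ha⟩ := hB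
  exact blocks_eq hC hC' (h ha) (h' ha)

lemma blocks_antisymm (h : SignedPartition.le p q) (h' : SignedPartition.le q p) :
    p.blocks = q.blocks := by
  have key : ∀ (a b : SignedPartition n), SignedPartition.le a b → SignedPartition.le b a →
      a.blocks ⊆ b.blocks := by
    intro a b hab hba B hB
    obtain ⟨C, hC, hBC⟩ := hab B hB
    obtain ⟨B', hB', hCB'⟩ := hba C hC
    have hBB' : B = B' := by
      obtain ⟨e, he⟩ := a.nonempty_blocks B hB
      exact blocks_eq hB hB' he (hCB' (hBC he))
    have hBC2 : B = C := Finset.Subset.antisymm hBC (hBB' ▸ hCB')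
    exact hBC2 ▸ hC
  exact Finset.Subset.antisymm (key p q h h') (key q p h' h)

lemma absMin_unique {m m' : ℕ} (h : absMin B m) (h' : absMin B m') : m = m' := by
  obtain ⟨⟨b, hb, rfl⟩, hmin⟩ := h
  obtain ⟨⟨b', hb', rfl⟩, hmin'⟩ := h'
  exact Nat.le_antisymm (hmin b' hb') (hmin' b hb)

lemma absMin_nB {m : ℕ} (h : absMin B m) : absMin (nB B) m := by
  obtain ⟨⟨b, hb, rfl⟩, hmin⟩ := h
  constructor
  · exact ⟨-b, mem_nB.mpr (by simpa using hb), by simp⟩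
  · intro b' hb'
    simpa using hmin (-b') (mem_nB.mp hb')

end SP
namespace SP

variable {n : ℕ}

section MergeA

/-- the four blocks involved in a type (a) merge are pairwise distinct -/
lemma fourne {p : SignedPartition n} {B1 B2 : Finset ℤ}
    (h1 : B1 ∈ p.blocks) (h2 : B2 ∈ p.blocks) (h01 : (0:ℤ) ∉ B1) (h02 : (0:ℤ) ∉ B2)
    (hne : B1 ≠ B2) (hne' : B2 ≠ nB B1) : B1 ≠ B2 ∧ B1 ≠ nB B1 ∧ B1 ≠ nB B2 ∧ B2 ≠ nB B1 ∧ B2 ≠ nB B2 ∧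
    nB B1 ≠ nB B2 := by
  refine ⟨hne, ne_nB_self h1 h01, ?_, hne', ne_nB_self h2 h02, ?_⟩
  · intro h; exact hne' (by rw [h, nB_nB])
  · intro h; exact hne (nB_inj h)

/-- type (a) merge: replace blocks B1, B2, -B1, -B2 by B1 ∪ B2 and -(B1 ∪ B2). -/
def mergeA (p : SignedPartition n) (B1 B2 : Finset ℤ) (h1 : B1 ∈ p.blocks)
    (h2 : B2 ∈ p.blocks) (h01 : (0:ℤ) ∉ B1) (h02 : (0:ℤ) ∉ B2)
    (hne : B1 ≠ B2) (hne' : B2 ≠ nB B1) : SignedPartition n where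
  blocks := (p.blocks \ {B1, B2, nB B1, nB B2}) ∪ {B1 ∪ B2, nB (B1 ∪ B2)}
  nonempty_blocks := by
    intro B hB
    rcases Finset.mem_union.mp hB with h | h
    · exact p.nonempty_blocks B (Finset.mem_sdiff.mp h).1
    · obtain ⟨a, ha⟩ := p.nonempty_blocks B1 h1
      rcases Finset.mem_insert.mp h with rfl | h
      · exact ⟨a, Finset.mem_union_left _ ha⟩
      · rw [Finset.mem_singleton.mp h]
        exact ⟨-a, mem_nB.mpr (by simpa using Finset.mem_union_left _ ha)⟩
  subset_ground := by
    intro B hB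
    have hg : B1 ∪ B2 ⊆ Finset.Icc (-(n:ℤ)) n :=
      Finset.union_subset (p.subset_ground B1 h1) (p.subset_ground B2 h2)
    rcases Finset.mem_union.mp hB with h | h
    · exact p.subset_ground B (Finset.mem_sdiff.mp h).1
    · rcases Finset.mem_insert.mp h with rfl | h
      · exact hg
      · rw [Finset.mem_singleton.mp h]
        intro a ha
        have := hg (mem_nB.mp ha)
        simp only [Finset.mem_Icc] at this ⊢
        omega
  disjoint_blocks := by
    have hd : ∀ D ∈ p.blocks, D ∉ ({B1, B2, nB B1, nB B2} : Finset (Finset ℤ)) →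
        Disjoint D (B1 ∪ B2) ∧ Disjoint D (nB (B1 ∪ B2)) := by
      intro D hD hDn
      simp only [Finset.mem_insert, Finset.mem_singleton, not_or] at hDn
      obtain ⟨hn1, hn2, hn3, hn4⟩ := hDn
      rw [nB_union]
      exact ⟨Finset.disjoint_union_right.mpr
          ⟨p.disjoint_blocks D hD B1 h1 hn1, p.disjoint_blocks D hD B2 h2 hn2⟩,
        Finset.disjoint_union_right.mpr
          ⟨p.disjoint_blocks D hD _ (nB_mem h1) hn3,
           p.disjoint_blocks D hD _ (nB_mem h2) hn4⟩⟩
    have hMM : Disjoint (B1 ∪ B2) (nB (B1 ∪ B2)) := by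
      obtain ⟨f1, f2, f3, f4, f5, f6⟩ := fourne h1 h2 h01 h02 hne hne'
      rw [nB_union]
      refine Finset.disjoint_union_left.mpr ⟨?_, ?_⟩ <;>
        refine Finset.disjoint_union_right.mpr ⟨?_, ?_⟩
      · exact p.disjoint_blocks _ h1 _ (nB_mem h1) f2
      · exact p.disjoint_blocks _ h1 _ (nB_mem h2) f3
      · exact p.disjoint_blocks _ h2 _ (nB_mem h1) f4
      · exact p.disjoint_blocks _ h2 _ (nB_mem h2) f5
    intro B hB C hC hBC
    rcases Finset.mem_union.mp hB with hB' | hB' <;>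
      rcases Finset.mem_union.mp hC with hC' | hC'
    · obtain ⟨hBp, _⟩ := Finset.mem_sdiff.mp hB'
      obtain ⟨hCp, _⟩ := Finset.mem_sdiff.mp hC'
      exact p.disjoint_blocks B hBp C hCp hBC
    · obtain ⟨hBp, hBn⟩ := Finset.mem_sdiff.mp hB'
      rcases Finset.mem_insert.mp hC' with rfl | hC'
      · exact (hd B hBp hBn).1
      · rw [Finset.mem_singleton.mp hC']; exact (hd B hBp hBn).2
    · obtain ⟨hCp, hCn⟩ := Finset.mem_sdiff.mp hC'
      rcases Finset.mem_insert.mp hB' with rfl | hB'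
      · exact ((hd C hCp hCn).1).symm
      · rw [Finset.mem_singleton.mp hB']; exact ((hd C hCp hCn).2).symm
    · have hB'' : B = B1 ∪ B2 ∨ B = nB (B1 ∪ B2) := by
        rcases Finset.mem_insert.mp hB' with h | h
        · exact Or.inl h
        · exact Or.inr (Finset.mem_singleton.mp h)
      have hC'' : C = B1 ∪ B2 ∨ C = nB (B1 ∪ B2) := by
        rcases Finset.mem_insert.mp hC' with h | h
        · exact Or.inl h
        · exact Or.inr (Finset.mem_singleton.mp h)
      rcases hB'' with h | h <;> rcases hC'' with h' | h'
      · exact absurd (h.trans h'.symm) hBC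
      · rw [h, h']; exact hMM
      · rw [h, h']; exact hMM.symm
      · exact absurd (h.trans h'.symm) hBC
  covers := by
    intro a ha
    obtain ⟨B, hB, haB⟩ := p.covers a ha
    by_cases hBn : B ∈ ({B1, B2, nB B1, nB B2} : Finset (Finset ℤ))
    · simp only [Finset.mem_insert, Finset.mem_singleton] at hBn
      rcases hBn with h | h | h | h
      · rw [h] at haB
        exact ⟨B1 ∪ B2, Finset.mem_union_right _ (by simp),
          Finset.mem_union_left _ haB⟩
      · rw [h] at haB
        exact ⟨B1 ∪ B2, Finset.mem_union_right _ (by simp),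
          Finset.mem_union_right _ haB⟩
      · rw [h] at haB
        exact ⟨nB (B1 ∪ B2), Finset.mem_union_right _ (by simp),
          by rw [nB_union]; exact Finset.mem_union_left _ haB⟩
      · rw [h] at haB
        exact ⟨nB (B1 ∪ B2), Finset.mem_union_right _ (by simp),
          by rw [nB_union]; exact Finset.mem_union_right _ haB⟩
    · exact ⟨B, Finset.mem_union_left _ (Finset.mem_sdiff.mpr ⟨hB, hBn⟩), haB⟩
  neg_mem := by
    intro B hB
    have him : ∀ X : Finset ℤ, X.image (fun k => -k) = nB X := fun _ => rfl
    rw [him]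
    rcases Finset.mem_union.mp hB with hB' | hB'
    · obtain ⟨hBp, hBn⟩ := Finset.mem_sdiff.mp hB'
      refine Finset.mem_union_left _ (Finset.mem_sdiff.mpr ⟨nB_mem hBp, ?_⟩)
      simp only [Finset.mem_insert, Finset.mem_singleton, not_or] at hBn ⊢
      obtain ⟨hn1, hn2, hn3, hn4⟩ := hBn
      refine ⟨?_, ?_, ?_, ?_⟩
      · intro h; exact hn3 (by rw [← h, nB_nB])
      · intro h; exact hn4 (by rw [← h, nB_nB])
      · intro h; exact hn1 (nB_inj h)
      · intro h; exact hn2 (nB_inj h)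
    · rcases Finset.mem_insert.mp hB' with rfl | hB'
      · exact Finset.mem_union_right _ (by simp)
      · rw [Finset.mem_singleton.mp hB', nB_nB]
        exact Finset.mem_union_right _ (by simp)
  zero_cond := by
    have key : ∀ i : ℤ, 0 < i → i ∈ B1 ∪ B2 → -i ∈ B1 ∪ B2 → False := by
      intro i hi hiM hniM
      obtain ⟨f1, f2, f3, f4, f5, f6⟩ := fourne h1 h2 h01 h02 hne hne'
      rcases Finset.mem_union.mp hiM with h | h <;>
        rcases Finset.mem_union.mp hniM with h' | h'
      · exact no_pair h1 h01 h h'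
      · exact f3 (blocks_eq h1 (nB_mem h2) h (mem_nB.mpr (by simpa using h')))
      · exact f4 (blocks_eq h2 (nB_mem h1) h (mem_nB.mpr (by simpa using h')))
      · exact no_pair h2 h02 h h'
    intro B hB i hi hiB hniB
    rcases Finset.mem_union.mp hB with hB' | hB'
    · exact p.zero_cond B (Finset.mem_sdiff.mp hB').1 i hi hiB hniB
    · rcases Finset.mem_insert.mp hB' with rfl | hB'
      · exact absurd hniB (fun h => key i hi hiB h)
      · rw [Finset.mem_singleton.mp hB'] at hiB hniB ⊢
        exact absurd (mem_nB.mp hiB)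
          (fun h => key i hi (by simpa using mem_nB.mp hniB) (by simpa using h))

end MergeA

end SP
namespace SP

variable {n : ℕ}

section MergeB

lemma nB_zero_block {p : SignedPartition n} {Z : Finset ℤ} (hZ : Z ∈ p.blocks)
    (h0Z : (0:ℤ) ∈ Z) : nB Z = Z :=
  blocks_eq (nB_mem hZ) hZ (zero_mem_nB.mpr h0Z) h0Z

/-- type (b) merge: replace blocks Z, B, -B (where 0 ∈ Z, 0 ∉ B) by Z ∪ B ∪ -B. -/
def mergeB (p : SignedPartition n) (Z B : Finset ℤ) (hZ : Z ∈ p.blocks)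
    (hB : B ∈ p.blocks) (h0Z : (0:ℤ) ∈ Z) (h0B : (0:ℤ) ∉ B) : SignedPartition n where
  blocks := (p.blocks \ {Z, B, nB B}) ∪ {Z ∪ B ∪ nB B}
  nonempty_blocks := by
    intro D hD
    rcases Finset.mem_union.mp hD with h | h
    · exact p.nonempty_blocks D (Finset.mem_sdiff.mp h).1
    · rw [Finset.mem_singleton.mp h]
      exact ⟨0, by simp [h0Z]⟩
  subset_ground := by
    intro D hD
    rcases Finset.mem_union.mp hD with h | h
    · exact p.subset_ground D (Finset.mem_sdiff.mp h).1
    · rw [Finset.mem_singleton.mp h]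
      exact Finset.union_subset
        (Finset.union_subset (p.subset_ground Z hZ) (p.subset_ground B hB))
        (p.subset_ground _ (nB_mem hB))
  disjoint_blocks := by
    have hd : ∀ D ∈ p.blocks, D ∉ ({Z, B, nB B} : Finset (Finset ℤ)) →
        Disjoint D (Z ∪ B ∪ nB B) := by
      intro D hD hDn
      simp only [Finset.mem_insert, Finset.mem_singleton, not_or] at hDn
      obtain ⟨hn1, hn2, hn3⟩ := hDn
      refine Finset.disjoint_union_right.mpr ⟨Finset.disjoint_union_right.mpr
        ⟨p.disjoint_blocks D hD Z hZ hn1, p.disjoint_blocks D hD B hB hn2⟩,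
        p.disjoint_blocks D hD _ (nB_mem hB) hn3⟩
    intro D hD E hE hDE
    rcases Finset.mem_union.mp hD with hD' | hD' <;>
      rcases Finset.mem_union.mp hE with hE' | hE'
    · obtain ⟨hDp, _⟩ := Finset.mem_sdiff.mp hD'
      obtain ⟨hEp, _⟩ := Finset.mem_sdiff.mp hE'
      exact p.disjoint_blocks D hDp E hEp hDE
    · obtain ⟨hDp, hDn⟩ := Finset.mem_sdiff.mp hD'
      rw [Finset.mem_singleton.mp hE']
      exact hd D hDp hDn
    · obtain ⟨hEp, hEn⟩ := Finset.mem_sdiff.mp hE'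
      rw [Finset.mem_singleton.mp hD']
      exact (hd E hEp hEn).symm
    · exact absurd ((Finset.mem_singleton.mp hD').trans
        (Finset.mem_singleton.mp hE').symm) hDE
  covers := by
    intro a ha
    obtain ⟨D, hD, haD⟩ := p.covers a ha
    by_cases hDn : D ∈ ({Z, B, nB B} : Finset (Finset ℤ))
    · refine ⟨Z ∪ B ∪ nB B, Finset.mem_union_right _ (by simp), ?_⟩
      simp only [Finset.mem_insert, Finset.mem_singleton] at hDn
      rcases hDn with h | h | h <;> rw [h] at haD
      · exact Finset.mem_union_left _ (Finset.mem_union_left _ haD)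
      · exact Finset.mem_union_left _ (Finset.mem_union_right _ haD)
      · exact Finset.mem_union_right _ haD
    · exact ⟨D, Finset.mem_union_left _ (Finset.mem_sdiff.mpr ⟨hD, hDn⟩), haD⟩
  neg_mem := by
    intro D hD
    have him : ∀ X : Finset ℤ, X.image (fun k => -k) = nB X := fun _ => rfl
    rw [him]
    rcases Finset.mem_union.mp hD with hD' | hD'
    · obtain ⟨hDp, hDn⟩ := Finset.mem_sdiff.mp hD'
      refine Finset.mem_union_left _ (Finset.mem_sdiff.mpr ⟨nB_mem hDp, ?_⟩)
      simp only [Finset.mem_insert, Finset.mem_singleton, not_or] at hDn ⊢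
      obtain ⟨hn1, hn2, hn3⟩ := hDn
      refine ⟨?_, ?_, ?_⟩
      · intro h
        exact hn1 (by rw [← nB_nB D, h, nB_zero_block hZ h0Z])
      · intro h; exact hn3 (by rw [← h, nB_nB])
      · intro h; exact hn2 (nB_inj h)
    · rw [Finset.mem_singleton.mp hD']
      have : nB (Z ∪ B ∪ nB B) = Z ∪ B ∪ nB B := by
        rw [nB_union, nB_union, nB_nB, nB_zero_block hZ h0Z]
        ext a
        simp only [Finset.mem_union]
        tauto
      rw [this]
      exact Finset.mem_union_right _ (by simp)
  zero_cond := by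
    intro D hD i hi hiD hniD
    rcases Finset.mem_union.mp hD with hD' | hD'
    · exact p.zero_cond D (Finset.mem_sdiff.mp hD').1 i hi hiD hniD
    · rw [Finset.mem_singleton.mp hD']
      exact Finset.mem_union_left _ (Finset.mem_union_left _ h0Z)

end MergeB

end SP
namespace SP

variable {n : ℕ}

lemma nB_subset {B C : Finset ℤ} (h : B ⊆ C) : nB B ⊆ nB C := by
  intro a ha
  exact mem_nB.mpr (h (mem_nB.mp ha))

lemma cover_struct_a {x x1 : SignedPartition n} (hcov : SignedPartition.covby x x1)
    {B1 B2 C : Finset ℤ} (h1 : B1 ∈ x.blocks) (h2 : B2 ∈ x.blocks)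
    (h01 : (0:ℤ) ∉ B1) (h02 : (0:ℤ) ∉ B2) (hne : B1 ≠ B2) (hne' : B2 ≠ nB B1)
    (hC : C ∈ x1.blocks) (hB1C : B1 ⊆ C) (hB2C : B2 ⊆ C) :
    x1.blocks = (x.blocks \ {B1, B2, nB B1, nB B2}) ∪ {B1 ∪ B2, nB (B1 ∪ B2)} := by
  set z := mergeA x B1 B2 h1 h2 h01 h02 hne hne' with hz
  have hzb : z.blocks = (x.blocks \ {B1, B2, nB B1, nB B2}) ∪ {B1 ∪ B2, nB (B1 ∪ B2)} := rfl
  have hMz : B1 ∪ B2 ∈ z.blocks := by rw [hzb]; exact Finset.mem_union_right _ (by simp)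
  have hMz' : nB (B1 ∪ B2) ∈ z.blocks := by
    rw [hzb]; exact Finset.mem_union_right _ (by simp)
  have hxz : SignedPartition.lt x z := by
    constructor
    · intro B hB
      by_cases hBn : B ∈ ({B1, B2, nB B1, nB B2} : Finset (Finset ℤ))
      · simp only [Finset.mem_insert, Finset.mem_singleton] at hBn
        rcases hBn with h | h | h | h <;> rw [h]
        · exact ⟨B1 ∪ B2, hMz, Finset.subset_union_left⟩
        · exact ⟨B1 ∪ B2, hMz, Finset.subset_union_right⟩
        · exact ⟨nB (B1 ∪ B2), hMz', nB_subset Finset.subset_union_left⟩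
        · exact ⟨nB (B1 ∪ B2), hMz', nB_subset Finset.subset_union_right⟩
      · refine ⟨B, ?_, subset_rfl⟩
        rw [hzb]
        exact Finset.mem_union_left _ (Finset.mem_sdiff.mpr ⟨hB, hBn⟩)
    · intro h
      obtain ⟨D, hD, hMD⟩ := h (B1 ∪ B2) hMz
      obtain ⟨a, ha⟩ := x.nonempty_blocks B1 h1
      obtain ⟨b, hb⟩ := x.nonempty_blocks B2 h2
      have e1 : B1 = D := blocks_eq h1 hD ha (hMD (Finset.mem_union_left _ ha))
      have e2 : B2 = D := blocks_eq h2 hD hb (hMD (Finset.mem_union_right _ hb))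
      exact hne (e1.trans e2.symm)
  have hzx1 : SignedPartition.le z x1 := by
    intro B hB
    rw [hzb] at hB
    rcases Finset.mem_union.mp hB with h | h
    · exact hcov.1.1 B (Finset.mem_sdiff.mp h).1
    · rcases Finset.mem_insert.mp h with h' | h'
      · rw [h']
        exact ⟨C, hC, Finset.union_subset hB1C hB2C⟩
      · rw [Finset.mem_singleton.mp h']
        refine ⟨nB C, nB_mem hC, ?_⟩
        rw [nB_union]
        exact Finset.union_subset (nB_subset hB1C) (nB_subset hB2C)
  have hx1z : SignedPartition.le x1 z := by
    have := hcov.2 z hxz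
    unfold SignedPartition.lt at this
    by_contra h
    exact this ⟨hzx1, h⟩
  rw [← hzb]
  exact blocks_antisymm hx1z hzx1

lemma cover_struct_b {x x1 : SignedPartition n} (hcov : SignedPartition.covby x x1)
    {Z B1 C : Finset ℤ} (hZ : Z ∈ x.blocks) (h0Z : (0:ℤ) ∈ Z)
    (h1 : B1 ∈ x.blocks) (h01 : (0:ℤ) ∉ B1)
    (hC : C ∈ x1.blocks) (hZC : Z ⊆ C) (hB1C : B1 ⊆ C) (hnB1C : nB B1 ⊆ C) :
    x1.blocks = (x.blocks \ {Z, B1, nB B1}) ∪ {Z ∪ B1 ∪ nB B1} := by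
  set z := mergeB x Z B1 hZ h1 h0Z h01 with hz
  have hzb : z.blocks = (x.blocks \ {Z, B1, nB B1}) ∪ {Z ∪ B1 ∪ nB B1} := rfl
  have hDz : Z ∪ B1 ∪ nB B1 ∈ z.blocks := by
    rw [hzb]; exact Finset.mem_union_right _ (by simp)
  have hxz : SignedPartition.lt x z := by
    constructor
    · intro B hB
      by_cases hBn : B ∈ ({Z, B1, nB B1} : Finset (Finset ℤ))
      · simp only [Finset.mem_insert, Finset.mem_singleton] at hBn
        rcases hBn with h | h | h <;> rw [h]
        · exact ⟨_, hDz, Finset.subset_union_left.trans Finset.subset_union_left⟩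
        · exact ⟨_, hDz, Finset.subset_union_right.trans Finset.subset_union_left⟩
        · exact ⟨_, hDz, Finset.subset_union_right⟩
      · refine ⟨B, ?_, subset_rfl⟩
        rw [hzb]
        exact Finset.mem_union_left _ (Finset.mem_sdiff.mpr ⟨hB, hBn⟩)
    · intro h
      obtain ⟨D, hD, hMD⟩ := h (Z ∪ B1 ∪ nB B1) hDz
      obtain ⟨a, ha⟩ := x.nonempty_blocks B1 h1
      have e1 : Z = D := blocks_eq hZ hD h0Z
        (hMD (Finset.mem_union_left _ (Finset.mem_union_left _ h0Z)))
      have e2 : B1 = D := blocks_eq h1 hD ha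
        (hMD (Finset.mem_union_left _ (Finset.mem_union_right _ ha)))
      have e3 : Z = B1 := e1.trans e2.symm
      rw [e3] at h0Z
      exact h01 h0Z
  have hzx1 : SignedPartition.le z x1 := by
    intro B hB
    rw [hzb] at hB
    rcases Finset.mem_union.mp hB with h | h
    · exact hcov.1.1 B (Finset.mem_sdiff.mp h).1
    · rw [Finset.mem_singleton.mp h]
      exact ⟨C, hC, Finset.union_subset (Finset.union_subset hZC hB1C) hnB1C⟩
  have hx1z : SignedPartition.le x1 z := by
    have := hcov.2 z hxz
    unfold SignedPartition.lt at this
    by_contra h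
    exact this ⟨hzx1, h⟩
  rw [← hzb]
  exact blocks_antisymm hx1z hzx1

end SP
namespace SP

variable {n : ℕ}

/-- The invariant label set for an interval `[x, y]`. -/
def Sprop (x y : SignedPartition n) (m : ℕ) : Prop :=
  ∃ B ∈ x.blocks, (0:ℤ) ∉ B ∧ absMin B m ∧
    ∃ C ∈ y.blocks, B ⊆ C ∧ ((0:ℤ) ∈ C ∨ ∃ b ∈ C, b.natAbs < m)

lemma Sprop_self (x : SignedPartition n) (m : ℕ) : ¬ Sprop x x m := by
  rintro ⟨B, hB, h0, hm, C, hC, hBC, hcond⟩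
  have hBC' : B = C := eq_of_subset_blocks hB hC hBC
  subst hBC'
  rcases hcond with h | ⟨b, hb, hlt⟩
  · exact h0 h
  · exact absurd (hm.2 b hb) (by omega)

lemma stepA {x x1 y : SignedPartition n} {B1 B2 : Finset ℤ} {m1 m2 : ℕ}
    (h1y : SignedPartition.le x1 y)
    (hx1 : x1.blocks = (x.blocks \ {B1, B2, nB B1, nB B2}) ∪ {B1 ∪ B2, nB (B1 ∪ B2)})
    (h1 : B1 ∈ x.blocks) (h2 : B2 ∈ x.blocks)
    (h01 : (0:ℤ) ∉ B1) (h02 : (0:ℤ) ∉ B2)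
    (hm1 : absMin B1 m1) (hm2 : absMin B2 m2) (hlt : m1 < m2) (m : ℕ) :
    Sprop x y m ↔ m = m2 ∨ Sprop x1 y m := by
  have hM : B1 ∪ B2 ∈ x1.blocks := by
    rw [hx1]; exact Finset.mem_union_right _ (by simp)
  have hM' : nB (B1 ∪ B2) ∈ x1.blocks := by
    rw [hx1]; exact Finset.mem_union_right _ (by simp)
  have h0M : (0:ℤ) ∉ B1 ∪ B2 := by
    simp only [Finset.mem_union]; tauto
  have h0M' : (0:ℤ) ∉ nB (B1 ∪ B2) := fun h => h0M (by simpa using mem_nB.mp h)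
  have hmM : absMin (B1 ∪ B2) m1 := by
    obtain ⟨⟨b, hb, hb'⟩, hmin⟩ := hm1
    refine ⟨⟨b, Finset.mem_union_left _ hb, hb'⟩, fun c hc => ?_⟩
    rcases Finset.mem_union.mp hc with h | h
    · exact hmin c h
    · exact le_of_lt (lt_of_lt_of_le hlt (hm2.2 c h))
  have hmM' : absMin (nB (B1 ∪ B2)) m1 := absMin_nB hmM
  obtain ⟨Cy, hCy, hMCy⟩ := h1y _ hM
  obtain ⟨Cy', hCy', hMCy'⟩ := h1y _ hM'
  obtain ⟨a1, ha1⟩ := x.nonempty_blocks B1 h1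
  obtain ⟨a2, ha2⟩ := x.nonempty_blocks B2 h2
  constructor
  · rintro ⟨B, hB, h0B, hmB, C0, hC0, hBC0, hcond⟩
    by_cases e1 : B = B1
    · rw [e1] at hmB hBC0
      have hm : m = m1 := absMin_unique hmB hm1
      have hcc : C0 = Cy := blocks_eq hC0 hCy (hBC0 ha1)
        (hMCy (Finset.mem_union_left _ ha1))
      refine Or.inr ⟨B1 ∪ B2, hM, h0M, hm ▸ hmM, Cy, hCy, hMCy, ?_⟩
      rw [← hcc]; exact hcond
    by_cases e2 : B = B2
    · rw [e2] at hmB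
      exact Or.inl (absMin_unique hmB hm2)
    by_cases e3 : B = nB B1
    · rw [e3] at hmB hBC0
      have hm : m = m1 := absMin_unique hmB (absMin_nB hm1)
      have hna1 : -a1 ∈ nB B1 := mem_nB.mpr (by simpa using ha1)
      have hcc : C0 = Cy' := blocks_eq hC0 hCy' (hBC0 hna1)
        (hMCy' (nB_subset Finset.subset_union_left hna1))
      refine Or.inr ⟨nB (B1 ∪ B2), hM', h0M', hm ▸ hmM', Cy', hCy', hMCy', ?_⟩
      rw [← hcc]; exact hcond
    by_cases e4 : B = nB B2
    · rw [e4] at hmB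
      exact Or.inl (absMin_unique hmB (absMin_nB hm2))
    · have hBx1 : B ∈ x1.blocks := by
        rw [hx1]
        exact Finset.mem_union_left _ (Finset.mem_sdiff.mpr ⟨hB, by
          simp only [Finset.mem_insert, Finset.mem_singleton]
          tauto⟩)
      exact Or.inr ⟨B, hBx1, h0B, hmB, C0, hC0, hBC0, hcond⟩
  · rintro (rfl | ⟨B, hB, h0B, hmB, C0, hC0, hBC0, hcond⟩)
    · obtain ⟨⟨b, hb, hb'⟩, _⟩ := hm1
      refine ⟨B2, h2, h02, hm2, Cy, hCy, Finset.Subset.trans Finset.subset_union_right hMCy,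
        Or.inr ⟨b, hMCy (Finset.mem_union_left _ hb), by rw [hb']; exact hlt⟩⟩
    · rw [hx1] at hB
      rcases Finset.mem_union.mp hB with h | h
      · exact ⟨B, (Finset.mem_sdiff.mp h).1, h0B, hmB, C0, hC0, hBC0, hcond⟩
      · rcases Finset.mem_insert.mp h with h' | h'
        · subst h'
          have hm : m = m1 := absMin_unique hmB hmM
          exact ⟨B1, h1, h01, hm ▸ hm1, C0, hC0,
            Finset.Subset.trans Finset.subset_union_left hBC0, hcond⟩
        · rw [Finset.mem_singleton.mp h'] at hmB hBC0
          have hm : m = m1 := absMin_unique hmB hmM'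
          exact ⟨nB B1, nB_mem h1, fun hh => h01 (by simpa using mem_nB.mp hh),
            hm ▸ absMin_nB hm1, C0, hC0,
            Finset.Subset.trans (nB_subset Finset.subset_union_left) hBC0, hcond⟩

lemma stepB {x x1 y : SignedPartition n} {Z B1 : Finset ℤ} {m1 : ℕ}
    (h1y : SignedPartition.le x1 y)
    (hx1 : x1.blocks = (x.blocks \ {Z, B1, nB B1}) ∪ {Z ∪ B1 ∪ nB B1})
    (hZ : Z ∈ x.blocks) (h0Z : (0:ℤ) ∈ Z)
    (h1 : B1 ∈ x.blocks) (h01 : (0:ℤ) ∉ B1)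
    (hm1 : absMin B1 m1) (m : ℕ) :
    Sprop x y m ↔ m = m1 ∨ Sprop x1 y m := by
  have hD : Z ∪ B1 ∪ nB B1 ∈ x1.blocks := by
    rw [hx1]; exact Finset.mem_union_right _ (by simp)
  obtain ⟨Cy, hCy, hDCy⟩ := h1y _ hD
  have h0Cy : (0:ℤ) ∈ Cy :=
    hDCy (Finset.mem_union_left _ (Finset.mem_union_left _ h0Z))
  constructor
  · rintro ⟨B, hB, h0B, hmB, C0, hC0, hBC0, hcond⟩
    by_cases e1 : B = Z
    · subst e1; exact absurd h0Z h0B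
    by_cases e2 : B = B1
    · subst e2; exact Or.inl (absMin_unique hmB hm1)
    by_cases e3 : B = nB B1
    · subst e3; exact Or.inl (absMin_unique hmB (absMin_nB hm1))
    · have hBx1 : B ∈ x1.blocks := by
        rw [hx1]
        exact Finset.mem_union_left _ (Finset.mem_sdiff.mpr ⟨hB, by
          simp only [Finset.mem_insert, Finset.mem_singleton]
          tauto⟩)
      exact Or.inr ⟨B, hBx1, h0B, hmB, C0, hC0, hBC0, hcond⟩
  · rintro (rfl | ⟨B, hB, h0B, hmB, C0, hC0, hBC0, hcond⟩)
    · exact ⟨B1, h1, h01, hm1, Cy, hCy,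
        Finset.Subset.trans (Finset.Subset.trans Finset.subset_union_right
          Finset.subset_union_left) hDCy, Or.inl h0Cy⟩
    · rw [hx1] at hB
      rcases Finset.mem_union.mp hB with h | h
      · exact ⟨B, (Finset.mem_sdiff.mp h).1, h0B, hmB, C0, hC0, hBC0, hcond⟩
      · rw [Finset.mem_singleton.mp h] at h0B
        exact absurd (Finset.mem_union_left _ (Finset.mem_union_left _ h0Z)) h0B

lemma step {x x1 y : SignedPartition n} {l : ℕ} (hcov : SignedPartition.covby x x1)
    (hl : MaxMinLabel x x1 l) (h1y : SignedPartition.le x1 y) (m : ℕ) :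
    Sprop x y m ↔ m = l ∨ Sprop x1 y m := by
  obtain ⟨B1, h1, B2, h2, hne, h01, h02, ⟨C, hC, hB1C, hB2C⟩, m1, m2, hm1, hm2, rfl⟩ := hl
  by_cases hb : B2 = nB B1
  · subst hb
    have hm12 : m2 = m1 := absMin_unique hm2 (absMin_nB hm1)
    obtain ⟨a, ha⟩ := x.nonempty_blocks B1 h1
    have hane : a ≠ 0 := fun h => h01 (h ▸ ha)
    have h0C : (0:ℤ) ∈ C := by
      have haC : a ∈ C := hB1C ha
      have hna : -a ∈ nB B1 := mem_nB.mpr (by simpa using ha)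
      have hnaC : -a ∈ C := hB2C hna
      rcases lt_or_gt_of_ne hane with h | h
      · exact x1.zero_cond C hC (-a) (by linarith) hnaC (by simpa using haC)
      · exact x1.zero_cond C hC a h haC hnaC
    obtain ⟨Z, hZ, h0Z⟩ := x.covers 0 (by
      simp only [Finset.mem_Icc]
      constructor <;> omega)
    have hZC : Z ⊆ C := by
      obtain ⟨C', hC', hZC'⟩ := hcov.1.1 Z hZ
      rw [blocks_eq hC' hC (hZC' h0Z) h0C] at hZC'
      exact hZC'
    have hx1 := cover_struct_b hcov hZ h0Z h1 h01 hC hZC hB1C hB2C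
    rw [hm12, Nat.max_self]
    exact stepB h1y hx1 hZ h0Z h1 h01 hm1 m
  · have hx1 := cover_struct_a hcov h1 h2 h01 h02 hne hb hC hB1C hB2C
    have hM : B1 ∪ B2 ∈ x1.blocks := by
      rw [hx1]; exact Finset.mem_union_right _ (by simp)
    obtain ⟨a1, ha1⟩ := x.nonempty_blocks B1 h1
    have hCM : C = B1 ∪ B2 :=
      blocks_eq hC hM (hB1C ha1) (Finset.mem_union_left _ ha1)
    have h0C : (0:ℤ) ∉ C := by
      rw [hCM]
      simp only [Finset.mem_union]; tauto
    have hm12 : m1 ≠ m2 := by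
      intro h
      obtain ⟨b1, hb1, hb1'⟩ := hm1.1
      obtain ⟨b2, hb2, hb2'⟩ := hm2.1
      have habs : b1.natAbs = b2.natAbs := by rw [hb1', hb2', h]
      rcases Int.natAbs_eq_natAbs_iff.mp habs with e | e
      · rw [e] at hb1
        exact hne (blocks_eq h1 h2 (e ▸ hb1) hb2)
      · have hb1ne : b1 ≠ 0 := fun hh => h01 (hh ▸ hb1)
        have hb1C : b1 ∈ C := hB1C hb1
        have hnb1C : -b1 ∈ C := hB2C (by rw [e]; simpa using hb2)
        rcases lt_or_gt_of_ne hb1ne with hlt | hlt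
        · exact h0C (x1.zero_cond C hC (-b1) (by linarith) hnb1C (by simpa using hb1C))
        · exact h0C (x1.zero_cond C hC b1 hlt hb1C hnb1C)
    rcases Nat.lt_or_ge m1 m2 with hlt | hge
    · rw [Nat.max_eq_right hlt.le]
      exact stepA h1y hx1 h1 h2 h01 h02 hm1 hm2 hlt m
    · have hlt : m2 < m1 := lt_of_le_of_ne hge (Ne.symm hm12)
      have hb' : B1 ≠ nB B2 := by
        intro h
        exact hb (by rw [h, nB_nB])
      have hsets : ({B1, B2, nB B1, nB B2} : Finset (Finset ℤ)) =
          {B2, B1, nB B2, nB B1} := by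
        ext D
        simp only [Finset.mem_insert, Finset.mem_singleton]
        tauto
      have hx1' : x1.blocks = (x.blocks \ {B2, B1, nB B2, nB B1}) ∪
          {B2 ∪ B1, nB (B2 ∪ B1)} := by
        rw [← hsets, Finset.union_comm B2 B1]
        exact hx1
      rw [Nat.max_eq_left hge]
      exact stepA h1y hx1' h2 h1 h02 h01 hm2 hm1 hlt m

end SP
namespace SP

variable {n : ℕ}

lemma chain_labels {y : SignedPartition n} :
    ∀ (c : List (SignedPartition n)) (x : SignedPartition n) (ℓ : List ℕ),
      IsSatChain x y c → LabelSeq c ℓ →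
      SignedPartition.le x y ∧ ∀ m, m ∈ ℓ ↔ Sprop x y m := by
  intro c
  induction c with
  | nil =>
    intro x ℓ hc _
    exact absurd hc.2.1 (by simp)
  | cons a tail ih =>
    intro x ℓ hc hℓ
    have hax : a = x := by simpa using hc.2.1
    cases tail with
    | nil =>
      have hay : a = y := by simpa using hc.2.2
      cases ℓ with
      | nil =>
        subst hax
        subst hay
        exact ⟨le_refl a, fun m => by
          simp only [List.not_mem_nil, false_iff]
          exact Sprop_self a m⟩
      | cons l ls => exact (hℓ : False).elim
    | cons b rest =>
      cases ℓ with
      | nil => exact (hℓ : False).elim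
      | cons l ls =>
        obtain ⟨hlab, hrest⟩ := hℓ
        have hchain := hc.1
        simp only [List.Chain', List.isChain_cons_cons] at hchain
        have hcov : SignedPartition.covby a b := hchain.1
        have hc' : IsSatChain b y (b :: rest) := by
          refine ⟨hchain.2, rfl, ?_⟩
          have := hc.2.2
          rwa [List.getLast?_cons_cons] at this
        obtain ⟨hby, hls⟩ := ih b ls hc' hrest
        have hay : SignedPartition.le a y := le_trans hcov.1.1 hby
        subst hax
        refine ⟨hay, fun m => ?_⟩
        rw [List.mem_cons, step hcov hlab hby m, hls m]

end SP

/-- For `x ≼ y` in `Π_n^B`, any two saturated chains from `x` to `y` have the same set of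
labels. -/
theorem label_set_independent_of_chain (n : ℕ) (x y : SignedPartition n)
    (hxy : SignedPartition.le x y)
    (c₁ c₂ : List (SignedPartition n)) (ℓ₁ ℓ₂ : List ℕ)
    (hc₁ : IsSatChain x y c₁) (hℓ₁ : LabelSeq c₁ ℓ₁)
    (hc₂ : IsSatChain x y c₂) (hℓ₂ : LabelSeq c₂ ℓ₂) :
    ∀ l : ℕ, l ∈ ℓ₁ ↔ l ∈ ℓ₂ := by
  intro l
  obtain ⟨-, h1⟩ := SP.chain_labels c₁ x ℓ₁ hc₁ hℓ₁
  obtain ⟨-, h2⟩ := SP.chain_labels c₂ x ℓ₂ hc₂ hℓ₂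
  rw [h1 l, h2 l]
end
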